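/- arXiv:2204.08021 — 10 statements merged into one kernel-verified Lean document; each statement's English description precedes it below -/
import Mathlib

section
/- Let f(t) = (1/t) · ln((t + 18)/8.5) for t > 0. Then f''(t) > 0 for all t > 0, i.e., f is strictly convex on (0, ∞). -/
/-!
Clearing denominators, `t³ (t + 18)² f''(t) = 2 (t + 18)² log ((t + 18) / 8.5) - t (3t + 36)`.
Since `8.5 ≤ 18`, the logarithm is at least `log (1 + t/18) ≥ 2t / (t + 36)`, and with this lower
bound the right-hand side becomes `4t (t + 18)² / (t + 36) - t (3t + 36) = t³ / (t + 36) > 0`.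
-/

open Real Filter

variable {a b t : ℝ}

lemma hasDerivAt_log_add_div_const (hb : b ≠ 0) (ht : t + a ≠ 0) :
    HasDerivAt (fun x => log ((x + a) / b)) (1 / (t + a)) t := by
  convert (((hasDerivAt_id' t).add_const a).div_const b).log (div_ne_zero ht hb) using 1
  field_simp

lemma hasDerivAt_log_add_div_const_div_self (hb : b ≠ 0) (ht₀ : t ≠ 0) (ht : t + a ≠ 0) :
    HasDerivAt (fun x => log ((x + a) / b) / x)
      (1 / (t * (t + a)) - log ((t + a) / b) / t ^ 2) t := by
  refine ((hasDerivAt_log_add_div_const hb ht).fun_div (hasDerivAt_id' t) ht₀).congr_deriv ?_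
  field_simp

lemma deriv_deriv_log_add_div_const_div_self (hb : b ≠ 0) (ht₀ : t ≠ 0) (ht : t + a ≠ 0) :
    deriv (deriv fun x => log ((x + a) / b) / x) t =
      (2 * log ((t + a) / b) * (t + a) ^ 2 - t * (3 * t + 2 * a)) / (t ^ 3 * (t + a) ^ 2) := by
  have hderiv : deriv (fun x => log ((x + a) / b) / x) =ᶠ[nhds t]
      fun x => 1 / (x * (x + a)) - log ((x + a) / b) / x ^ 2 := by
    have ht' : t ∈ {x | x + a ≠ 0} := ht
    filter_upwards [eventually_ne_nhds ht₀,
      (isOpen_ne_fun (continuous_add_const a) continuous_const).mem_nhds ht'] with x hx₀ hx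
    exact (hasDerivAt_log_add_div_const_div_self hb hx₀ hx).deriv
  have hprod : HasDerivAt (fun x => x * (x + a)) (t + a + t) t := by
    simpa using (hasDerivAt_id' t).fun_mul ((hasDerivAt_id' t).add_const a)
  have h := ((hasDerivAt_const t (1 : ℝ)).fun_div hprod (mul_ne_zero ht₀ ht)).fun_sub
    ((hasDerivAt_log_add_div_const hb ht).fun_div (hasDerivAt_pow 2 t) (pow_ne_zero 2 ht₀))
  rw [hderiv.deriv_eq, h.deriv]
  field_simp
  ring

lemma mul_lt_two_mul_log_add_div_mul_sq (hb : 0 < b) (hba : b ≤ a) (ht : 0 < t) :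
    t * (3 * t + 2 * a) < 2 * log ((t + a) / b) * (t + a) ^ 2 := by
  have ha : 0 < a := hb.trans_le hba
  have hlog : 2 * t / (t + 2 * a) ≤ log ((t + a) / b) :=
    calc 2 * t / (t + 2 * a) = 2 * (t / a) / (t / a + 2) := by field_simp
      _ ≤ log (1 + t / a) := le_log_one_add_of_nonneg (by positivity)
      _ = log ((t + a) / a) := by congr 1; field_simp; ring
      _ ≤ log ((t + a) / b) := by gcongr
  have hkey : t * (3 * t + 2 * a) < 2 * (2 * t / (t + 2 * a)) * (t + a) ^ 2 := by
    rw [← sub_pos]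
    convert_to 0 < t ^ 3 / (t + 2 * a)
    · field_simp
      ring
    · positivity
  calc t * (3 * t + 2 * a) < 2 * (2 * t / (t + 2 * a)) * (t + a) ^ 2 := hkey
    _ ≤ 2 * log ((t + a) / b) * (t + a) ^ 2 := by gcongr

theorem deriv_deriv_log_add_div_const_div_self_pos (hb : 0 < b) (hba : b ≤ a) (ht : 0 < t) :
    0 < deriv (deriv fun x => log ((x + a) / b) / x) t := by
  rw [deriv_deriv_log_add_div_const_div_self hb.ne' ht.ne' (by linarith)]
  have : 0 < t + a := by linarith
  exact div_pos (sub_pos.2 (mul_lt_two_mul_log_add_div_mul_sq hb hba ht)) (by positivity)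

theorem second_deriv_pos (t : ℝ) (ht : 0 < t) :
    0 < deriv (deriv (fun t : ℝ => Real.log ((t + 18) / 8.5) / t)) t :=
  deriv_deriv_log_add_div_const_div_self_pos (by norm_num) (by norm_num) ht
end

section
/- Let g(t) = 2(t+18)² · ln((t+18)/8.5) − (3t² + 36t). Then g(t) > 0 for all t > 0. -/
/-! Since `log` lies above `1 - 1/x`, rescaling by `e` gives `log y ≥ 2 - e / y`. With
`s = t + 18` this reduces the claim to `4 s² - 17 e s > 3 s² - 72 s + 324`, which holds for
`s > 18` as soon as `e < 3`. -/

open Real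

lemma Real.two_sub_exp_one_div_le_log {x : ℝ} (hx : 0 < x) : 2 - exp 1 / x ≤ log x := by
  have h := one_sub_inv_le_log_of_pos (div_pos hx (exp_pos 1))
  rw [inv_div, log_div hx.ne' (exp_pos 1).ne', log_exp] at h
  linarith

theorem g_pos (t : ℝ) (ht : 0 < t) :
    0 < 2 * (t + 18) ^ 2 * Real.log ((t + 18) / 8.5) - (3 * t ^ 2 + 36 * t) := by
  have hs : 0 < t + 18 := by linarith
  have hlog := two_sub_exp_one_div_le_log (x := (t + 18) / 8.5) (by positivity)
  have hbound : 4 * (t + 18) ^ 2 - 17 * exp 1 * (t + 18) ≤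
      2 * (t + 18) ^ 2 * Real.log ((t + 18) / 8.5) := by
    calc 4 * (t + 18) ^ 2 - 17 * exp 1 * (t + 18)
        = 2 * (t + 18) ^ 2 * (2 - exp 1 / ((t + 18) / 8.5)) := by field_simp; ring
      _ ≤ _ := mul_le_mul_of_nonneg_left hlog (by positivity)
  nlinarith [exp_one_lt_three]
end

section
/- For all real numbers a, b, c with 0 < a < b and c > 0, one has ∫_a^b ln(1 + c/t)/t dt ≤ (9/8) · ln( b(3a + 2c) / (a(3b + 2c)) ) + c(b − a)/(4ab). -/
/-!
The key is the [2/1] Padé bound `log (1 + x) ≤ x (6 + x) / (6 + 4 x)` for `x ≥ 0`: the gap vanishes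
at `0` and has derivative `x³ / ((3 + 2x)² (1 + x)) ≥ 0`. Substituting `x = c / t` and dividing by
`t` bounds the integrand by a rational function of `t` whose primitive is elementary.
-/

open Real Set intervalIntegral

lemma hasDerivAt_log_one_add_pade_gap {y : ℝ} (hy : 0 ≤ y) :
    HasDerivAt (fun y => 9 * y / (4 * (3 + 2 * y)) + y / 4 - log (1 + y))
      (y ^ 3 / ((3 + 2 * y) ^ 2 * (1 + y))) y := by
  have h3 : 3 + 2 * y ≠ 0 := by positivity
  have h1 : 1 + y ≠ 0 := by positivity
  have hquot : HasDerivAt (fun y => 9 * y / (4 * (3 + 2 * y)))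
      ((9 * (4 * (3 + 2 * y)) - 9 * y * 8) / (4 * (3 + 2 * y)) ^ 2) y := by
    have hnum : HasDerivAt (fun y => 9 * y) 9 y :=
      ((hasDerivAt_id' y).const_mul 9).congr_deriv (mul_one 9)
    have hden : HasDerivAt (fun y => 4 * (3 + 2 * y)) 8 y :=
      ((((hasDerivAt_id' y).const_mul 2).const_add 3).const_mul 4).congr_deriv (by norm_num)
    exact hnum.fun_div hden (by positivity)
  have hlog : HasDerivAt (fun y => log (1 + y)) (1 / (1 + y)) y := by
    simpa using ((hasDerivAt_id y).const_add 1).log h1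
  refine ((hquot.add ((hasDerivAt_id y).div_const 4)).sub hlog).congr_deriv ?_
  field_simp
  ring

theorem log_one_add_le_pade {x : ℝ} (hx : 0 ≤ x) :
    log (1 + x) ≤ 9 * x / (4 * (3 + 2 * x)) + x / 4 := by
  have hmono : MonotoneOn (fun y => 9 * y / (4 * (3 + 2 * y)) + y / 4 - log (1 + y)) (Ici 0) := by
    refine monotoneOn_of_hasDerivWithinAt_nonneg (convex_Ici 0)
      (fun y hy => (hasDerivAt_log_one_add_pade_gap hy).continuousAt.continuousWithinAt)
      (fun y hy => (hasDerivAt_log_one_add_pade_gap (interior_subset hy)).hasDerivWithinAt)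
      (fun y hy => ?_)
    have hy : 0 ≤ y := interior_subset hy
    positivity
  have := hmono self_mem_Ici hx hx
  norm_num at this
  linarith

section

variable {c : ℝ}

lemma log_one_add_div_div_le {t : ℝ} (hc : 0 ≤ c) (ht : 0 < t) :
    log (1 + c / t) / t ≤ 9 * c / (4 * t * (3 * t + 2 * c)) + c / (4 * t ^ 2) := by
  calc log (1 + c / t) / t ≤ (9 * (c / t) / (4 * (3 + 2 * (c / t))) + c / t / 4) / t :=
        div_le_div_of_nonneg_right (log_one_add_le_pade (by positivity)) ht.le
    _ = 9 * c / (4 * t * (3 * t + 2 * c)) + c / (4 * t ^ 2) := by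
        have : 3 * t + 2 * c ≠ 0 := by positivity
        field_simp

lemma hasDerivAt_log_bound_primitive {t : ℝ} (hc : 0 ≤ c) (ht : 0 < t) :
    HasDerivAt (fun t => 9 / 8 * (log t - log (3 * t + 2 * c)) - c / 4 * t⁻¹)
      (9 * c / (4 * t * (3 * t + 2 * c)) + c / (4 * t ^ 2)) t := by
  have hlin : 3 * t + 2 * c ≠ 0 := by positivity
  have hlog : HasDerivAt (fun t => log (3 * t + 2 * c)) (3 / (3 * t + 2 * c)) t := by
    simpa using (((hasDerivAt_id' t).const_mul 3).add_const (2 * c)).log hlin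
  refine ((((hasDerivAt_log ht.ne').sub hlog).const_mul (9 / 8)).sub
    ((hasDerivAt_inv ht.ne').const_mul (c / 4))).congr_deriv ?_
  field_simp
  ring

lemma continuousOn_log_bound_majorant {a b : ℝ} (ha : 0 < a) (hb : 0 < b) (hc : 0 ≤ c) :
    ContinuousOn (fun t => 9 * c / (4 * t * (3 * t + 2 * c)) + c / (4 * t ^ 2)) (uIcc a b) := by
  intro t ht
  have ht : 0 < t := ordConnected_Ioi.uIcc_subset ha hb ht
  have : 3 * t + 2 * c ≠ 0 := by positivity
  apply ContinuousAt.continuousWithinAt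
  fun_prop (disch := positivity)

lemma integral_log_bound_majorant {a b : ℝ} (ha : 0 < a) (hb : 0 < b) (hc : 0 ≤ c) :
    ∫ t in a..b, (9 * c / (4 * t * (3 * t + 2 * c)) + c / (4 * t ^ 2)) =
      9 / 8 * log (b * (3 * a + 2 * c) / (a * (3 * b + 2 * c))) + c * (b - a) / (4 * a * b) := by
  rw [integral_eq_sub_of_hasDerivAt
    (fun t ht => hasDerivAt_log_bound_primitive hc (ordConnected_Ioi.uIcc_subset ha hb ht))
    (continuousOn_log_bound_majorant ha hb hc).intervalIntegrable]
  have h3a : 0 < 3 * a + 2 * c := by positivity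
  have h3b : 0 < 3 * b + 2 * c := by positivity
  rw [log_div (by positivity) (by positivity), log_mul hb.ne' h3a.ne', log_mul ha.ne' h3b.ne']
  field_simp
  ring

end

theorem integral_log_bound (a b c : ℝ) (ha : 0 < a) (hab : a < b) (hc : 0 < c) :
    ∫ t in a..b, Real.log (1 + c / t) / t ≤
      9 / 8 * Real.log (b * (3 * a + 2 * c) / (a * (3 * b + 2 * c))) +
        c * (b - a) / (4 * a * b) := by
  have hb : 0 < b := ha.trans hab
  have hf : ContinuousOn (fun t => log (1 + c / t) / t) (uIcc a b) := by
    intro t ht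
    have ht : 0 < t := ordConnected_Ioi.uIcc_subset ha hb ht
    have : 1 + c / t ≠ 0 := by positivity
    apply ContinuousAt.continuousWithinAt
    fun_prop (disch := positivity)
  calc ∫ t in a..b, log (1 + c / t) / t
      ≤ ∫ t in a..b, (9 * c / (4 * t * (3 * t + 2 * c)) + c / (4 * t ^ 2)) :=
        integral_mono_on hab.le hf.intervalIntegrable
          (continuousOn_log_bound_majorant ha hb hc.le).intervalIntegrable
          fun t ht => log_one_add_div_div_le hc.le (ha.trans_le ht.1)
    _ = _ := integral_log_bound_majorant ha hb hc.le
end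

section
/- For every integer k ≥ 2, the Riemann zeta function satisfies (∏_{i=k+1}^{2k} ζ(i)) / (∏_{i=2}^{k} ζ(i)) > π^{4−2k} · 2^{3k−7}. -/
/-!
Write `R k = π ^ (4 - 2k) 2 ^ (3k - 7) = (π⁴ / 128) (8 / π²) ^ k`. The numerator is a product of
values `ζ(i) ≥ 1`, so it suffices that `R k · ζ(2) ⋯ ζ(k) < 1`. At `k = 2` this product is
`π² / 12 < 1`, and passing from `k` to `k + 1` multiplies it by `8 ζ(k + 1) / π² ≤ 8 ζ(3) / π²`,
which is at most `1` because telescoping gives `ζ(3) ≤ 11 / 9 < π² / 8`.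
-/

noncomputable def zeta (s : ℕ) : ℝ := ∑' n : ℕ, 1 / ((n : ℝ) + 1) ^ s

open Real Finset

lemma summable_zeta_terms {s : ℕ} (hs : 2 ≤ s) :
    Summable (fun n : ℕ => 1 / ((n : ℝ) + 1) ^ s) := by
  have h := (summable_nat_add_iff 1).mpr (Real.summable_one_div_nat_pow.mpr hs)
  simpa using h

lemma zeta_eq_one_add_tsum {s : ℕ} (hs : 2 ≤ s) :
    zeta s = 1 + ∑' n : ℕ, 1 / ((n : ℝ) + 2) ^ s := by
  rw [zeta, (summable_zeta_terms hs).tsum_eq_zero_add]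
  norm_num [add_assoc]

lemma one_le_zeta {s : ℕ} (hs : 2 ≤ s) : 1 ≤ zeta s := by
  rw [zeta_eq_one_add_tsum hs]
  exact le_add_of_nonneg_right (tsum_nonneg fun n => by positivity)

lemma zeta_pos {s : ℕ} (hs : 2 ≤ s) : 0 < zeta s :=
  one_pos.trans_le (one_le_zeta hs)

lemma zeta_antitone {s t : ℕ} (hs : 2 ≤ s) (hst : s ≤ t) : zeta t ≤ zeta s := by
  refine (summable_zeta_terms (hs.trans hst)).tsum_le_tsum (fun n => ?_) (summable_zeta_terms hs)
  gcongr
  linarith [(n.cast_nonneg : (0 : ℝ) ≤ n)]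

lemma zeta_two : zeta 2 = π ^ 2 / 6 := by
  have h := (hasSum_nat_add_iff' 1).mpr hasSum_zeta_two
  simpa [zeta] using h.tsum_eq

lemma zeta_three_le : zeta 3 ≤ 11 / 9 := by
  set g : ℕ → ℝ := fun n => 2 / (2 * (n : ℝ) + 3) ^ 2
  -- `g n - g (n + 1) = 16x / (4x² - 1)² ≥ 1 / x³` for `x = n + 2`
  have term_le : ∀ n : ℕ, 1 / ((n : ℝ) + 2) ^ 3 ≤ g n - g (n + 1) := by
    intro n
    simp only [g]
    push_cast
    rw [div_sub_div _ _ (by positivity) (by positivity), div_le_div_iff₀ (by positivity) (by positivity)]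
    nlinarith [(n.cast_nonneg : (0 : ℝ) ≤ n)]
  have tail_le : ∑' n : ℕ, 1 / ((n : ℝ) + 2) ^ 3 ≤ 2 / 9 := by
    refine Real.tsum_le_of_sum_range_le (fun n => by positivity) fun N => ?_
    calc ∑ n ∈ range N, 1 / ((n : ℝ) + 2) ^ 3
        ≤ ∑ n ∈ range N, (g n - g (n + 1)) := sum_le_sum fun n _ => term_le n
      _ = g 0 - g N := sum_range_sub' g N
      _ ≤ 2 / 9 := by simp only [g]; norm_num; positivity
  rw [zeta_eq_one_add_tsum (by norm_num)]
  linarith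

lemma zeta_le_pi_sq_div_eight {s : ℕ} (hs : 3 ≤ s) : zeta s ≤ π ^ 2 / 8 := by
  calc zeta s ≤ zeta 3 := zeta_antitone (by norm_num) hs
    _ ≤ 11 / 9 := zeta_three_le
    _ ≤ π ^ 2 / 8 := by nlinarith [pi_gt_d2]

lemma pi_rpow_mul_two_rpow_eq (k : ℕ) :
    π ^ ((4 : ℝ) - 2 * k) * 2 ^ ((3 : ℝ) * k - 7) = π ^ 4 / 128 * (8 / π ^ 2) ^ k := by
  rw [rpow_sub pi_pos, rpow_sub two_pos, rpow_mul pi_pos.le, rpow_mul zero_le_two]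
  norm_num [div_pow, ← pow_mul]
  field_simp

lemma pow_mul_prod_zeta_le {k : ℕ} (hk : 2 ≤ k) :
    (8 / π ^ 2) ^ k * ∏ i ∈ Icc 2 k, zeta i ≤ 32 / (3 * π ^ 2) := by
  induction k, hk using Nat.le_induction with
  | base =>
    rw [Icc_self, prod_singleton, zeta_two]
    field_simp
    norm_num
  | succ k hk ih =>
    have factor_le_one : 8 / π ^ 2 * zeta (k + 1) ≤ 1 := by
      rw [div_mul_eq_mul_div, div_le_one (by positivity)]
      linarith [zeta_le_pi_sq_div_eight (s := k + 1) (by omega)]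
    calc (8 / π ^ 2) ^ (k + 1) * ∏ i ∈ Icc 2 (k + 1), zeta i
        = (8 / π ^ 2) ^ k * (∏ i ∈ Icc 2 k, zeta i) * (8 / π ^ 2 * zeta (k + 1)) := by
          rw [prod_Icc_succ_top (by omega), pow_succ]; ring
      _ ≤ 32 / (3 * π ^ 2) * 1 := by
          gcongr
          exact mul_nonneg (by positivity) (zeta_pos (by omega)).le
      _ = 32 / (3 * π ^ 2) := mul_one _

theorem zeta_ratio_bound (k : ℕ) (hk : 2 ≤ k) :
    (∏ i ∈ Finset.Icc (k + 1) (2 * k), zeta i) / (∏ i ∈ Finset.Icc 2 k, zeta i) >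
      Real.pi ^ ((4 : ℝ) - 2 * k) * 2 ^ ((3 : ℝ) * k - 7) := by
  have num_ge : 1 ≤ ∏ i ∈ Icc (k + 1) (2 * k), zeta i :=
    one_le_prod fun i hi => one_le_zeta (by grind)
  have den_pos : 0 < ∏ i ∈ Icc 2 k, zeta i := prod_pos fun i hi => zeta_pos (mem_Icc.mp hi).1
  rw [pi_rpow_mul_two_rpow_eq, gt_iff_lt, lt_div_iff₀ den_pos]
  calc π ^ 4 / 128 * (8 / π ^ 2) ^ k * ∏ i ∈ Icc 2 k, zeta i
      = π ^ 4 / 128 * ((8 / π ^ 2) ^ k * ∏ i ∈ Icc 2 k, zeta i) := mul_assoc _ _ _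
    _ ≤ π ^ 4 / 128 * (32 / (3 * π ^ 2)) := by gcongr; exact pow_mul_prod_zeta_le hk
    _ = π ^ 2 / 12 := by field_simp; ring
    _ < 1 := by nlinarith [pi_lt_d2, pi_pos]
    _ ≤ _ := num_ge
end

section
/- For every integer k ≥ 2, (∏_{i=k+1}^{2k} Γ(i/2 + 1)) / (∏_{i=2}^{k} Γ(i/2 + 1)) ≥ √π · 2^{k²/2} · e^{−(3k²+4)/4} · k^{(2k²−2k−1)/4} · √((2k)! / (k!·(k+1)!)). -/
/-!
Write `Q k` for the ratio of Gamma products and `L k` for the bound. Passing from `k` to `k + 2`,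
the numerator of `Q` gains the factors `i = 2k+1, …, 2k+4` and loses `i = k+1, k+2`, which move to
the denominator. By Legendre's duplication formula `Γ(i/2 + 1) Γ(i/2 + 3/2) = √π (i+1)! / 2^(i+1)`
these factors pair up into factorials: `Q (k+2) = Q k · (2k+2)! (2k+4)! / (2^(2k+2) ((k+2)!)²)`.
On the other side `L (k+2) ≤ L k · 2^(2k+4) e^(-(2k+4)) (k+2)^(2k+1)`: the Catalan number under
the root grows by at most `16`, and the power of `k` is controlled by
`(1 + 2/k)^a ≤ e^(2a/k) ≤ e^(k-1)` for the exponent `a = (2k² - 2k - 1)/4`. The bounds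
`4ⁿ < n·C(2n, n)` and `nⁿ ≤ eⁿ n!` show that the second factor is at most the first, so the
inequality propagates from `k` to `k + 2`; it holds at `k = 2` and `k = 3`, where `Q` equals
`3√π/2` and `30`.
-/

open Real Finset Nat

namespace Finset

variable {M : Type*} [CommMonoid M] (f : ℕ → M) {a b : ℕ}

theorem prod_Ioc_add_two_right (h : a ≤ b) :
    ∏ i ∈ Ioc a (b + 2), f i = (∏ i ∈ Ioc a b, f i) * (f (b + 1) * f (b + 2)) := by
  rw [prod_Ioc_succ_top (by omega), prod_Ioc_succ_top h, mul_assoc]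

theorem prod_Ioc_add_two_left (h : a + 2 ≤ b) :
    ∏ i ∈ Ioc a b, f i = f (a + 1) * f (a + 2) * ∏ i ∈ Ioc (a + 2) b, f i := by
  rw [← prod_Ioc_consecutive f (by omega) h, prod_Ioc_add_two_right f le_rfl, Ioc_self,
    prod_empty, one_mul]

end Finset

namespace Nat

theorem centralBinom_mul_factorial_sq (n : ℕ) : centralBinom n * n ! ^ 2 = (2 * n)! := by
  rw [centralBinom_eq_two_mul_choose, sq, ← mul_assoc,
    ← choose_mul_factorial_mul_factorial (by omega : n ≤ 2 * n), show 2 * n - n = n by omega]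

theorem four_pow_mul_factorial_sq_lt {n : ℕ} (hn : 4 ≤ n) : 4 ^ n * n ! ^ 2 < n * (2 * n)! := by
  rw [← centralBinom_mul_factorial_sq, ← mul_assoc]
  exact Nat.mul_lt_mul_of_pos_right (four_pow_lt_mul_centralBinom n hn) (by positivity)

theorem catalan_succ_le_four_mul (n : ℕ) : catalan (n + 1) ≤ 4 * catalan n := by
  have h := succ_mul_centralBinom_succ n
  rw [← succ_mul_catalan_eq_centralBinom, ← succ_mul_catalan_eq_centralBinom] at h
  have h' : (n + 2) * catalan (n + 1) = 2 * (2 * n + 1) * catalan n :=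
    Nat.eq_of_mul_eq_mul_left n.succ_pos (by linarith)
  refine Nat.le_of_mul_le_mul_left (c := n + 2) ?_ (by omega)
  rw [h']
  nlinarith

theorem cast_catalan_eq (n : ℕ) : (catalan n : ℝ) = (2 * n)! / (n ! * (n + 1)!) := by
  rw [eq_div_iff (by positivity), ← centralBinom_mul_factorial_sq,
    ← succ_mul_catalan_eq_centralBinom, factorial_succ]
  push_cast
  ring

theorem sqrt_catalan_add_two_le (n : ℕ) :
    √(catalan (n + 2) : ℝ) ≤ 4 * √(catalan n : ℝ) := by
  rw [show (4 : ℝ) = √(4 ^ 2) by simp, ← sqrt_mul' _ (Nat.cast_nonneg _)]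
  gcongr
  exact_mod_cast (catalan_succ_le_four_mul (n + 1)).trans
    (by nlinarith [catalan_succ_le_four_mul n])

end Nat

namespace Real

theorem pow_le_exp_mul_factorial (n : ℕ) : (n : ℝ) ^ n ≤ exp n * n ! := by
  have h := pow_div_factorial_le_exp (n : ℝ) (Nat.cast_nonneg n) n
  rwa [div_le_iff₀ (by positivity)] at h

theorem add_one_pow_mul_le_exp_mul_pow (m n : ℕ) :
    ((m : ℝ) + 1) ^ (m * n) ≤ exp n * (m : ℝ) ^ (m * n) := by
  rcases Nat.eq_zero_or_pos m with rfl | hm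
  · simp
  have h : ((m : ℝ) + 1) ^ m = m ^ m * (1 + (m : ℝ)⁻¹) ^ m := by
    rw [← mul_pow]; field_simp
  rw [pow_mul, pow_mul, h, mul_pow, mul_comm, ← exp_one_pow]
  gcongr
  exact one_add_inv_pow_le_exp

theorem add_rpow_le_rpow_mul_exp {x y a : ℝ} (hx : 0 < x) (hy : 0 ≤ y) (ha : 0 ≤ a) :
    (x + y) ^ a ≤ x ^ a * exp (a * y / x) := by
  have h : x + y = x * (1 + y / x) := by field_simp
  rw [h, mul_rpow hx.le (by positivity), mul_div_assoc, mul_comm a, exp_mul]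
  gcongr
  linarith [add_one_le_exp (y / x)]

end Real

noncomputable def gammaHalf (i : ℕ) : ℝ := Gamma ((i : ℝ) / 2 + 1)

theorem gammaHalf_pos (i : ℕ) : 0 < gammaHalf i := Gamma_pos_of_pos (by positivity)

theorem gammaHalf_mul_gammaHalf_succ (i : ℕ) :
    gammaHalf i * gammaHalf (i + 1) = √π * (i + 1)! / 2 ^ (i + 1) := by
  have h := Gamma_mul_Gamma_add_half ((i : ℝ) / 2 + 1)
  rw [show (i : ℝ) / 2 + 1 + 1 / 2 = ((i + 1 : ℕ) : ℝ) / 2 + 1 by push_cast; ring,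
    show 2 * ((i : ℝ) / 2 + 1) = ((i + 1 : ℕ) : ℝ) + 1 by push_cast; ring,
    show (1 : ℝ) - (((i + 1 : ℕ) : ℝ) + 1) = -((i + 1 : ℕ) : ℝ) by ring,
    Gamma_nat_eq_factorial, rpow_neg zero_le_two, rpow_natCast] at h
  rw [gammaHalf, gammaHalf, h]
  field_simp

noncomputable def gammaRatio (k : ℕ) : ℝ :=
  (∏ i ∈ Icc (k + 1) (2 * k), gammaHalf i) / ∏ i ∈ Icc 2 k, gammaHalf i

noncomputable def gammaRatioStep (k : ℕ) : ℝ :=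
  (2 * k + 2)! * (2 * k + 4)! / (2 ^ (2 * k + 2) * ((k + 2)! : ℝ) ^ 2)

theorem gammaRatio_nonneg (k : ℕ) : 0 ≤ gammaRatio k :=
  div_nonneg (prod_nonneg fun i _ => (gammaHalf_pos i).le)
    (prod_nonneg fun i _ => (gammaHalf_pos i).le)

theorem gammaRatio_add_two {k : ℕ} (hk : 1 ≤ k) :
    gammaRatio (k + 2) = gammaRatio k * gammaRatioStep k := by
  have hIcc (a b : ℕ) : Icc (a + 1) b = Ioc a b := Icc_add_one_left_eq_Ioc a b
  have hnum : (∏ i ∈ Ioc (k + 2) (2 * k + 4), gammaHalf i) *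
      (gammaHalf (k + 1) * gammaHalf (k + 2)) = (∏ i ∈ Ioc k (2 * k), gammaHalf i) *
        ((gammaHalf (2 * k + 1) * gammaHalf (2 * k + 2)) *
          (gammaHalf (2 * k + 3) * gammaHalf (2 * k + 4))) := by
    rw [mul_comm, ← mul_assoc, ← prod_Ioc_add_two_left _ (by omega),
      show 2 * k + 4 = 2 * k + 2 + 2 by ring, prod_Ioc_add_two_right _ (by omega),
      prod_Ioc_add_two_right _ (by omega)]
  rw [gammaHalf_mul_gammaHalf_succ (k + 1), gammaHalf_mul_gammaHalf_succ (2 * k + 1),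
    gammaHalf_mul_gammaHalf_succ (2 * k + 3)] at hnum
  simp only [gammaRatio, gammaRatioStep, hIcc]
  rw [show 2 * (k + 2) = 2 * k + 4 by ring, prod_Ioc_add_two_right _ hk,
    gammaHalf_mul_gammaHalf_succ (k + 1), eq_div_of_mul_eq (by positivity) hnum]
  field_simp
  ring

theorem gammaHalf_two : gammaHalf 2 = 1 := by
  norm_num [gammaHalf]

theorem gammaHalf_four : gammaHalf 4 = 2 := by
  norm_num [gammaHalf, show (3 : ℝ) = 2 + 1 by norm_num, Gamma_add_one]

theorem gammaRatio_two : gammaRatio 2 = 3 / 2 * √π := by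
  rw [gammaRatio, show Icc (2 + 1) (2 * 2) = {3, 4} by rfl, Icc_self, prod_pair (by norm_num),
    prod_singleton, gammaHalf_mul_gammaHalf_succ 3, gammaHalf_two]
  norm_num [Nat.factorial]
  ring

theorem gammaRatio_three : gammaRatio 3 = 30 := by
  rw [gammaRatio, show Icc (3 + 1) (2 * 3) = {4, 5, 6} by rfl, show Icc 2 3 = {2, 3} by rfl,
    prod_insert (by norm_num), prod_pair (by norm_num), prod_pair (by norm_num),
    gammaHalf_mul_gammaHalf_succ 5, gammaHalf_mul_gammaHalf_succ 2, gammaHalf_four]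
  field_simp
  norm_num [Nat.factorial]

noncomputable def gammaRatioLowerBound (k : ℕ) : ℝ :=
  √π * 2 ^ ((k : ℝ) ^ 2 / 2) * exp (-(3 * (k : ℝ) ^ 2 + 4) / 4) *
    (k : ℝ) ^ ((2 * (k : ℝ) ^ 2 - 2 * k - 1) / 4) * √(((2 * k)! : ℝ) / (k ! * (k + 1)!))

noncomputable def gammaRatioLowerBoundStep (k : ℕ) : ℝ :=
  2 ^ (2 * k + 4) * exp (-(2 * k + 4)) * ((k : ℝ) + 2) ^ (2 * k + 1)

theorem gammaRatioLowerBound_two_le : gammaRatioLowerBound 2 ≤ 3 / 2 * √π := by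
  have h2 : (2 : ℝ) ^ ((3 : ℝ) / 4) ≤ 2 := by
    simpa using rpow_le_rpow_of_exponent_le (by norm_num : (1 : ℝ) ≤ 2)
      (by norm_num : (3 : ℝ) / 4 ≤ 1)
  have hs : √2 ≤ 3 / 2 := by rw [sqrt_le_left (by norm_num)]; norm_num
  have he : exp (-4) ≤ 1 / 9 := by
    have := add_one_le_exp (2 : ℝ)
    rw [exp_neg, one_div, show (4 : ℝ) = 2 + 2 by norm_num, exp_add]
    exact inv_anti₀ (by norm_num) (by nlinarith)
  norm_num [gammaRatioLowerBound, Nat.factorial]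
  calc √π * 4 * rexp (-4) * 2 ^ ((3 : ℝ) / 4) * √2
      ≤ √π * 4 * (1 / 9) * 2 * (3 / 2) := by gcongr
    _ ≤ 3 / 2 * √π := by linarith [sqrt_nonneg π]

theorem gammaRatioLowerBound_three_le : gammaRatioLowerBound 3 ≤ 30 := by
  have hπ : √π ≤ 2 := by rw [sqrt_le_left zero_le_two]; linarith [pi_le_four]
  have h2 : (2 : ℝ) ^ ((9 : ℝ) / 2) ≤ 2 ^ (5 : ℝ) :=
    rpow_le_rpow_of_exponent_le (by norm_num) (by norm_num)
  have h3 : (3 : ℝ) ^ ((11 : ℝ) / 4) ≤ 3 ^ (3 : ℝ) :=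
    rpow_le_rpow_of_exponent_le (by norm_num) (by norm_num)
  have h5 : √5 ≤ 3 := by rw [sqrt_le_left (by norm_num)]; norm_num
  have he : exp (-(31 / 4)) ≤ 1 / 200 := by
    have h7 : (27 / 10 : ℝ) ^ 7 ≤ exp 7 := by
      rw [show (7 : ℝ) = (7 : ℕ) by norm_num, ← exp_one_pow]
      gcongr
      linarith [exp_one_gt_d9]
    rw [exp_neg, one_div]
    refine inv_anti₀ (by norm_num) ?_
    calc (200 : ℝ) ≤ (27 / 10) ^ 7 := by norm_num
      _ ≤ exp 7 := h7
      _ ≤ exp (31 / 4) := exp_le_exp.2 (by norm_num)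
  norm_num [gammaRatioLowerBound, Nat.factorial] at h2 h3 ⊢
  calc √π * 2 ^ ((9 : ℝ) / 2) * rexp (-(31 / 4)) * 3 ^ ((11 : ℝ) / 4) * √5
      ≤ 2 * 32 * (1 / 200) * 27 * 3 := by gcongr
    _ ≤ 30 := by norm_num

theorem gammaRatioLowerBound_add_two_le {k : ℕ} (hk : 2 ≤ k) :
    gammaRatioLowerBound (k + 2) ≤ gammaRatioLowerBound k * gammaRatioLowerBoundStep k := by
  have hk' : (2 : ℝ) ≤ k := by exact_mod_cast hk
  have hpow2 :
      (2 : ℝ) ^ (((k : ℝ) + 2) ^ 2 / 2) = 2 ^ ((k : ℝ) ^ 2 / 2) * 2 ^ (2 * k + 2) := by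
    rw [← rpow_natCast (2 : ℝ) (2 * k + 2), ← rpow_add zero_lt_two]
    push_cast
    ring_nf
  have hexp : exp (-(3 * ((k : ℝ) + 2) ^ 2 + 4) / 4) =
      exp (-(3 * (k : ℝ) ^ 2 + 4) / 4) * exp (-(2 * k + 4)) / exp (k - 1) := by
    rw [← exp_add, ← exp_sub]
    ring_nf
  have hrpow : ((k : ℝ) + 2) ^ ((2 * ((k : ℝ) + 2) ^ 2 - 2 * ((k : ℝ) + 2) - 1) / 4) ≤
      (k : ℝ) ^ ((2 * (k : ℝ) ^ 2 - 2 * k - 1) / 4) * exp (k - 1) *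
        ((k : ℝ) + 2) ^ (2 * k + 1) := by
    rw [show (2 * ((k : ℝ) + 2) ^ 2 - 2 * ((k : ℝ) + 2) - 1) / 4 =
      (2 * (k : ℝ) ^ 2 - 2 * k - 1) / 4 + (2 * k + 1 : ℕ) by
      push_cast; ring, rpow_add (by positivity), rpow_natCast]
    gcongr
    refine (add_rpow_le_rpow_mul_exp (by positivity) zero_le_two (by nlinarith)).trans ?_
    gcongr
    rw [div_le_iff₀ (by positivity)]
    nlinarith
  rw [gammaRatioLowerBound, gammaRatioLowerBound, gammaRatioLowerBoundStep, ← cast_catalan_eq,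
    ← cast_catalan_eq]
  push_cast
  rw [hpow2, hexp]
  calc _ ≤ √π * (2 ^ ((k : ℝ) ^ 2 / 2) * 2 ^ (2 * k + 2)) *
          (exp (-(3 * (k : ℝ) ^ 2 + 4) / 4) * exp (-(2 * k + 4)) / exp (k - 1)) *
          ((k : ℝ) ^ ((2 * (k : ℝ) ^ 2 - 2 * k - 1) / 4) * exp (k - 1) *
            ((k : ℝ) + 2) ^ (2 * k + 1)) * (4 * √(catalan k : ℝ)) := by
        gcongr
        exact sqrt_catalan_add_two_le k
    _ = _ := by
      field_simp
      ring

theorem gammaRatioLowerBoundStep_le_gammaRatioStep {k : ℕ} (hk : 2 ≤ k) :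
    gammaRatioLowerBoundStep k ≤ gammaRatioStep k := by
  have hC : (4 : ℝ) ^ (k + 2) * ((k + 2)! : ℝ) ^ 2 ≤ ((k : ℝ) + 2) * (2 * k + 4)! := by
    exact_mod_cast (four_pow_mul_factorial_sq_lt (n := k + 2) (by omega)).le
  have hF := pow_le_exp_mul_factorial (2 * k + 2)
  have hP := add_one_pow_mul_le_exp_mul_pow (k + 1) 2
  rw [show (k + 1) * 2 = 2 * k + 2 by ring] at hP
  push_cast at hF hP
  rw [add_assoc, one_add_one_eq_two] at hP
  rw [gammaRatioLowerBoundStep, gammaRatioStep, le_div_iff₀ (by positivity), exp_neg]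
  calc 2 ^ (2 * k + 4) * (exp (2 * k + 4))⁻¹ * ((k : ℝ) + 2) ^ (2 * k + 1) *
        (2 ^ (2 * k + 2) * ((k + 2)! : ℝ) ^ 2)
      = 2 ^ (2 * k + 2) * ((k : ℝ) + 2) ^ (2 * k + 1) * (4 ^ (k + 2) * ((k + 2)! : ℝ) ^ 2) /
          exp (2 * k + 4) := by
        rw [show 2 * k + 4 = 2 * (k + 2) by ring, pow_mul]
        norm_num
        field_simp
    _ ≤ 2 ^ (2 * k + 2) * ((k : ℝ) + 2) ^ (2 * k + 1) * (((k : ℝ) + 2) * (2 * k + 4)!) /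
          exp (2 * k + 4) := by
        gcongr
    _ ≤ 2 ^ (2 * k + 2) * (exp 2 * ((k : ℝ) + 1) ^ (2 * k + 2)) * (2 * k + 4)! /
          exp (2 * k + 4) := by
        rw [← mul_assoc, mul_assoc _ (_ ^ _), ← pow_succ]
        gcongr
    _ = (2 * (k : ℝ) + 2) ^ (2 * k + 2) / exp (2 * k + 2) * (2 * k + 4)! := by
        rw [show (2 * (k : ℝ) + 2) = 2 * (k + 1) by ring, mul_pow,
          show (2 * k + 4 : ℝ) = 2 + (2 * k + 2) by ring, exp_add]
        field_simp
    _ ≤ (2 * k + 2)! * (2 * k + 4)! := by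
        gcongr
        exact (div_le_iff₀' (exp_pos _)).2 hF

theorem gammaRatioLowerBound_le_gammaRatio {k : ℕ} (hk : 2 ≤ k) :
    gammaRatioLowerBound k ≤ gammaRatio k := by
  obtain ⟨n, rfl⟩ := Nat.exists_eq_add_of_le' hk
  clear hk
  induction n using Nat.twoStepInduction with
  | zero => exact gammaRatio_two ▸ gammaRatioLowerBound_two_le
  | one => exact gammaRatio_three ▸ gammaRatioLowerBound_three_le
  | more n ih _ =>
    calc gammaRatioLowerBound (n + 2 + 2)
        ≤ gammaRatioLowerBound (n + 2) * gammaRatioLowerBoundStep (n + 2) :=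
          gammaRatioLowerBound_add_two_le (by omega)
      _ ≤ gammaRatio (n + 2) * gammaRatioStep (n + 2) :=
          mul_le_mul ih (gammaRatioLowerBoundStep_le_gammaRatioStep (by omega))
            (by unfold gammaRatioLowerBoundStep; positivity) (gammaRatio_nonneg _)
      _ = gammaRatio (n + 2 + 2) := (gammaRatio_add_two (by omega)).symm

theorem gamma_ratio_bound (k : ℕ) (hk : 2 ≤ k) :
    (∏ i ∈ Finset.Icc (k + 1) (2 * k), Real.Gamma ((i : ℝ) / 2 + 1)) /
        (∏ i ∈ Finset.Icc 2 k, Real.Gamma ((i : ℝ) / 2 + 1)) ≥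
      Real.sqrt Real.pi * 2 ^ ((k : ℝ) ^ 2 / 2) *
        Real.exp (-(3 * (k : ℝ) ^ 2 + 4) / 4) *
        (k : ℝ) ^ ((2 * (k : ℝ) ^ 2 - 2 * k - 1) / 4) *
        Real.sqrt ((Nat.factorial (2 * k) : ℝ) /
          ((Nat.factorial k : ℝ) * (Nat.factorial (k + 1) : ℝ))) :=
  gammaRatioLowerBound_le_gammaRatio hk
end

section
/- For every real x ≥ 1, (x/e)^x · √(2πx) < Γ(x+1) < (x/e)^x · √(2π(x + 1/2)). -/
/-!
Let `μ x = log Γ(x) - (x - 1/2) log x + x - log (2π) / 2` (Binet's function). By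
`Γ(x + 1) = x Γ(x)`,
`μ x - μ (x + 1) = (x + 1/2) log (1 + 1/x) - 1 = ∑_{k ≥ 1} (2x + 1)^(-2k) / (2k + 1)`,
which lies strictly between `0` and `1/(12x) - 1/(12(x + 1))`. Stirling's formula for `n!`
and Wendel's limit `log Γ(x + n) - log Γ(n) - x log n → 0` give `μ (x + n) → 0`. Hence
`μ (x + n)` decreases to `0` and `μ (x + n) - 1/(12(x + n))` increases to `0`, so
`0 < μ x ≤ 1/(12x)`. The lower bound of the theorem is `μ x > 0`; the upper bound is
`μ x < log (1 + 1/(2x)) / 2`, which holds because `1/(12x) ≤ 1/(4x + 1)` for `x ≥ 1` and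
`1/(4x + 1) < log (1 + 1/(2x)) / 2` is the positivity of `μ (2x) - μ (2x + 1)`.
-/

open Filter Topology Real

namespace Real

noncomputable def binetStep (x : ℝ) : ℝ := (x + 1 / 2) * log (1 + x⁻¹) - 1

theorem hasSum_binetStep {x : ℝ} (hx : 0 < x) :
    HasSum (fun k : ℕ => ((2 * x + 1)⁻¹ ^ 2) ^ (k + 1) / (2 * (k + 1) + 1)) (binetStep x) := by
  have h := (hasSum_nat_add_iff' 1).mpr ((hasSum_log_one_add_inv hx).mul_left (x + 1 / 2))
  convert h using 1 <;> try rfl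
  · ext k
    rw [one_div (2 * x + 1), ← pow_mul, pow_succ _ (2 * (k + 1))]
    push_cast
    field_simp
  · rw [binetStep, Finset.sum_range_one]
    congr 1
    simp only [Nat.cast_zero, mul_zero, zero_add, div_one, pow_one]
    field_simp

theorem binetStep_pos {x : ℝ} (hx : 0 < x) : 0 < binetStep x :=
  hasSum_lt (f := 0) (i := 0) (fun k => by positivity) (by positivity) hasSum_zero
    (hasSum_binetStep hx)

theorem binetStep_le {x : ℝ} (hx : 0 < x) :
    binetStep x ≤ 1 / (12 * x) - 1 / (12 * (x + 1)) := by
  set r := (2 * x + 1)⁻¹ ^ 2 with hr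
  have hr0 : 0 ≤ r := by positivity
  have hr1 : r < 1 := by
    rw [hr]
    apply pow_lt_one₀ (by positivity) (inv_lt_one_of_one_lt₀ (by linarith)) two_ne_zero
  have hgeom : HasSum (fun k : ℕ => r ^ (k + 1) / 3) ((1 - r)⁻¹ * r / 3) := by
    simpa only [pow_succ] using ((hasSum_geometric_of_lt_one hr0 hr1).mul_right r).div_const 3
  have hval : (1 - r)⁻¹ * r / 3 = 1 / (12 * x) - 1 / (12 * (x + 1)) := by
    have hr' : 1 - r = 4 * x * (x + 1) / (2 * x + 1) ^ 2 := by
      rw [hr]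
      field_simp
      ring
    rw [hr', hr]
    field_simp
    ring
  rw [← hval]
  refine hasSum_le (fun k => ?_) (hasSum_binetStep hx) hgeom
  gcongr
  norm_cast
  omega

noncomputable def binetMu (x : ℝ) : ℝ :=
  log (Gamma x) - (x - 1 / 2) * log x + x - log (2 * π) / 2

theorem log_Gamma_add_one {x : ℝ} (hx : 0 < x) :
    log (Gamma (x + 1)) = log (Gamma x) + log x := by
  rw [Gamma_add_one hx.ne', log_mul hx.ne' (Gamma_pos_of_pos hx).ne', add_comm]

theorem binetMu_sub_binetMu_add_one {x : ℝ} (hx : 0 < x) :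
    binetMu x - binetMu (x + 1) = binetStep x := by
  have hlog_div : log (1 + x⁻¹) = log (x + 1) - log x := by
    rw [← log_div (by positivity) hx.ne']
    congr 1
    field_simp
  rw [binetMu, binetMu, binetStep, log_Gamma_add_one hx, hlog_div]
  ring

theorem binetMu_natCast {n : ℕ} (hn : n ≠ 0) :
    binetMu n = log (Stirling.stirlingSeq n) - log √π := by
  obtain ⟨k, rfl⟩ := Nat.exists_eq_succ_of_ne_zero hn
  have hk : (0 : ℝ) < k + 1 := by positivity
  rw [Stirling.log_stirlingSeq_formula, binetMu, Nat.factorial_succ]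
  push_cast
  rw [Gamma_nat_eq_factorial, log_mul hk.ne' (by positivity), log_mul two_ne_zero hk.ne',
    log_mul two_ne_zero pi_ne_zero, log_div hk.ne' (exp_pos 1).ne', log_exp, log_sqrt pi_pos.le]
  ring

theorem tendsto_binetMu_natCast : Tendsto (fun n : ℕ => binetMu n) atTop (𝓝 0) := by
  have h := (((continuousAt_log (sqrt_pos.2 pi_pos).ne').tendsto.comp
    Stirling.tendsto_stirlingSeq_sqrt_pi).sub_const (log √π))
  rw [sub_self] at h
  refine h.congr' ?_
  filter_upwards [eventually_ne_atTop 0] with n hn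
  exact (binetMu_natCast hn).symm

theorem tendsto_log_Gamma_add_nat_sub_log_Gamma_nat {x : ℝ} (hx : 0 < x) :
    Tendsto (fun n : ℕ => log (Gamma (x + n)) - log (Gamma n) - x * log n) atTop (𝓝 0) := by
  rw [← tendsto_add_atTop_iff_nat 1]
  have h := ((BohrMollerup.tendsto_log_gamma hx).const_sub (log (Gamma x))).sub
    (tendsto_log_nat_add_one_sub_log.const_mul x)
  rw [sub_self, mul_zero, sub_zero] at h
  refine h.congr fun n => ?_
  have hsum := BohrMollerup.f_add_nat_eq (f := log ∘ Gamma) (log_Gamma_add_one ·) hx (n + 1)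
  simp only [Function.comp_apply] at hsum
  push_cast at hsum ⊢
  rw [hsum, Gamma_nat_eq_factorial, BohrMollerup.logGammaSeq]
  ring

theorem tendsto_binetMu_add_nat {x : ℝ} (hx : 0 < x) :
    Tendsto (fun n : ℕ => binetMu (x + n)) atTop (𝓝 0) := by
  have hmul : Tendsto (fun n : ℕ => n * log (1 + x / n)) atTop (𝓝 x) :=
    (tendsto_mul_log_one_add_div_atTop x).comp tendsto_natCast_atTop_atTop
  have hlog : Tendsto (fun n : ℕ => log (1 + x / n)) atTop (𝓝 0) := by
    have h := (tendsto_const_div_atTop_nhds_zero_nat x).const_add 1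
    rw [add_zero] at h
    rw [← log_one]
    exact (continuousAt_log one_ne_zero).tendsto.comp h
  have h := ((tendsto_binetMu_natCast.add (tendsto_log_Gamma_add_nat_sub_log_Gamma_nat hx)).sub
    (hmul.add (hlog.const_mul (x - 1 / 2)))).add_const x
  rw [zero_add, mul_zero, add_zero, zero_sub, neg_add_cancel] at h
  refine h.congr' ?_
  filter_upwards [eventually_ne_atTop 0] with n hn
  have hn0 : (0 : ℝ) < n := by positivity
  have hlog_div : log (1 + x / n) = log (x + n) - log n := by
    rw [← log_div (by positivity) hn0.ne']
    congr 1
    field_simp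
    ring
  rw [hlog_div, binetMu, binetMu]
  ring

theorem binetMu_pos {x : ℝ} (hx : 0 < x) : 0 < binetMu x := by
  have hanti : Antitone (fun n : ℕ => binetMu (x + n)) := antitone_nat_of_succ_le fun n => by
    have hxn : 0 < x + n := by positivity
    push_cast
    rw [← add_assoc]
    linarith [binetMu_sub_binetMu_add_one hxn, binetStep_pos hxn]
  have hnonneg : 0 ≤ binetMu (x + 1) := by
    simpa using hanti.le_of_tendsto (tendsto_binetMu_add_nat hx) 1
  linarith [binetMu_sub_binetMu_add_one hx, binetStep_pos hx]

theorem binetMu_le {x : ℝ} (hx : 0 < x) : binetMu x ≤ 1 / (12 * x) := by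
  have hmono : Monotone (fun n : ℕ => binetMu (x + n) - 1 / (12 * (x + n))) :=
    monotone_nat_of_le_succ fun n => by
      have hxn : 0 < x + n := by positivity
      push_cast
      rw [← add_assoc]
      linarith [binetMu_sub_binetMu_add_one hxn, binetStep_le hxn]
  have hinv : Tendsto (fun n : ℕ => 1 / (12 * (x + n))) atTop (𝓝 0) :=
    tendsto_const_nhds.div_atTop
      ((tendsto_atTop_add_const_left _ x tendsto_natCast_atTop_atTop).const_mul_atTop
        (by norm_num))
  have h := hmono.ge_of_tendsto (by simpa using (tendsto_binetMu_add_nat hx).sub hinv) 0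
  simpa [sub_nonpos] using h

theorem binetMu_lt_log_one_add_inv_two_mul_div_two {x : ℝ} (hx : 1 ≤ x) :
    binetMu x < log (1 + (2 * x)⁻¹) / 2 := by
  have hx0 : 0 < x := by linarith
  have hstep := binetStep_pos (x := 2 * x) (by positivity)
  rw [binetStep] at hstep
  calc binetMu x ≤ 1 / (12 * x) := binetMu_le hx0
    _ ≤ 1 / (4 * x + 1) := one_div_le_one_div_of_le (by positivity) (by linarith)
    _ < log (1 + (2 * x)⁻¹) / 2 := by
      rw [div_lt_div_iff₀ (by positivity) two_pos]
      linarith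

theorem log_Gamma_add_one_eq {x : ℝ} (hx : 0 < x) :
    log (Gamma (x + 1)) = x * log (x / exp 1) + log (2 * π * x) / 2 + binetMu x := by
  rw [log_Gamma_add_one hx, binetMu, log_div hx.ne' (exp_pos 1).ne', log_exp,
    log_mul (by positivity) hx.ne']
  ring

end Real

theorem stirling_two_sided (x : ℝ) (hx : 1 ≤ x) :
    (x / Real.exp 1) ^ x * Real.sqrt (2 * Real.pi * x) < Real.Gamma (x + 1) ∧
      Real.Gamma (x + 1) < (x / Real.exp 1) ^ x * Real.sqrt (2 * Real.pi * (x + 1 / 2)) := by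
  have hx0 : 0 < x := by linarith
  have hΓ : 0 < Gamma (x + 1) := Gamma_pos_of_pos (by linarith)
  have hlog {c : ℝ} (hc : 0 < c) :
      log ((x / exp 1) ^ x * √c) = x * log (x / exp 1) + log c / 2 := by
    rw [log_mul (by positivity) (sqrt_pos.2 hc).ne', log_rpow (by positivity), log_sqrt hc.le]
  have hsplit : log (2 * π * (x + 1 / 2)) = log (2 * π * x) + log (1 + (2 * x)⁻¹) := by
    rw [← log_mul (by positivity) (by positivity)]
    congr 1
    field_simp
  constructor
  · rw [← log_lt_log_iff (by positivity) hΓ, hlog (by positivity), log_Gamma_add_one_eq hx0]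
    linarith [binetMu_pos hx0]
  · rw [← log_lt_log_iff hΓ (by positivity), hlog (by positivity), log_Gamma_add_one_eq hx0, hsplit]
    linarith [binetMu_lt_log_one_add_inv_two_mul_div_two hx]
end

section
/- For every integer k ≥ 2, ∑_{i=k+1}^{2k} i·ln(i) − ∑_{i=2}^{k} i·ln(i) ≥ ((2k² − 2k − 1)/2)·ln(k) + 2k²·ln(2) − (k² + 2)/2. -/
/-!
Induction on `k`, starting at `k = 1`. Writing `f x = x log x`, passing from `k` to `k + 1` adds
`f (2k+1) + f (2k+2) - 2 f (k+1) = (2k+1) log (2k+1) + (2k+2) log 2` to the left-hand side. Since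
`log (2k+1) ≥ log 2 + log k` and `k (log (k+1) - log k) ≤ 1`, this dominates the increment of
the right-hand side; what is left over is at least `log 2 - 1/2 > 0`.
-/

open Finset Real

theorem sum_Icc_two_mul_succ_add {M : Type*} [AddCommMonoid M] (f : ℕ → M) (k : ℕ) :
    ∑ i ∈ Icc (k + 1 + 1) (2 * (k + 1)), f i + f (k + 1) =
      ∑ i ∈ Icc (k + 1) (2 * k), f i + f (2 * k + 1) + f (2 * k + 2) := by
  rw [Icc_add_one_left_eq_Ioc, Icc_add_one_left_eq_Ioc]
  calc ∑ i ∈ Ioc (k + 1) (2 * (k + 1)), f i + f (k + 1)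
      = ∑ i ∈ Ioc k (k + 1), f i + ∑ i ∈ Ioc (k + 1) (2 * k + 1 + 1), f i := by
        rw [Nat.Ioc_succ_singleton, sum_singleton, add_comm,
          show 2 * (k + 1) = 2 * k + 1 + 1 by ring]
    _ = ∑ i ∈ Ioc k (2 * k + 1 + 1), f i := sum_Ioc_consecutive f (by omega) (by omega)
    _ = _ := by rw [sum_Ioc_succ_top (by omega), sum_Ioc_succ_top (by omega)]

theorem log_add_one_sub_log_le_inv {x : ℝ} (hx : 0 < x) : log (x + 1) - log x ≤ x⁻¹ := by
  rw [← log_div (by positivity) hx.ne']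
  calc log ((x + 1) / x) ≤ (x + 1) / x - 1 := log_le_sub_one_of_pos (by positivity)
    _ = x⁻¹ := by field_simp; ring

theorem log_two_add_log_le_log_two_mul_add_one {x : ℝ} (hx : 0 < x) :
    log 2 + log x ≤ log (2 * x + 1) := by
  rw [← log_mul two_ne_zero hx.ne']
  exact log_le_log (by positivity) (by linarith)

theorem one_half_lt_log_two : 1 / 2 < log 2 := by
  have := log_two_gt_d9; norm_num at this ⊢; linarith

noncomputable def mulLogBound (x : ℝ) : ℝ :=
  (2 * x ^ 2 - 2 * x - 1) / 2 * log x + 2 * x ^ 2 * log 2 - (x ^ 2 + 2) / 2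

theorem mulLogBound_succ_sub_le {x : ℝ} (hx : 1 ≤ x) :
    mulLogBound (x + 1) - mulLogBound x ≤
      (2 * x + 1) * log (2 * x + 1) + (2 * x + 2) * log (2 * x + 2) -
        2 * ((x + 1) * log (x + 1)) := by
  have hx₀ : 0 < x := by linarith
  have hlog_two_mul : log (2 * x + 2) = log 2 + log (x + 1) := by
    rw [← log_mul two_ne_zero (by positivity)]; ring_nf
  have hgrowth : x * (log (x + 1) - log x) ≤ 1 := by
    calc x * (log (x + 1) - log x) ≤ x * x⁻¹ := by
          gcongr; exact log_add_one_sub_log_le_inv hx₀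
      _ = 1 := mul_inv_cancel₀ hx₀.ne'
  have hodd := mul_le_mul_of_nonneg_left (log_two_add_log_le_log_two_mul_add_one hx₀)
    (by positivity : (0 : ℝ) ≤ 2 * x + 1)
  have hmono : log x ≤ log (x + 1) := log_le_log hx₀ (by linarith)
  have hlogx : 0 ≤ log x := log_nonneg hx
  unfold mulLogBound
  rw [hlog_two_mul]
  linarith [mul_le_mul_of_nonneg_left hgrowth (by positivity : (0 : ℝ) ≤ x + 1),
    one_half_lt_log_two]

theorem mulLogBound_le_sum_sub_sum {k : ℕ} (hk : 1 ≤ k) :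
    mulLogBound k ≤ (∑ i ∈ Icc (k + 1) (2 * k), (i : ℝ) * log i) -
        ∑ i ∈ Icc 2 k, (i : ℝ) * log i := by
  induction k, hk using Nat.le_induction with
  | base => norm_num [mulLogBound]
  | succ k hk ih =>
    have hupper := sum_Icc_two_mul_succ_add (fun i : ℕ => (i : ℝ) * log i) k
    rw [sum_Icc_succ_top (by omega)]
    have hstep := mulLogBound_succ_sub_le (x := k) (by exact_mod_cast hk)
    push_cast at hupper hstep ⊢
    linarith

theorem sum_mul_log_bound (k : ℕ) (hk : 2 ≤ k) :
    (∑ i ∈ Finset.Icc (k + 1) (2 * k), (i : ℝ) * Real.log i) -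
        ∑ i ∈ Finset.Icc 2 k, (i : ℝ) * Real.log i ≥
      (2 * (k : ℝ) ^ 2 - 2 * k - 1) / 2 * Real.log k + 2 * (k : ℝ) ^ 2 * Real.log 2 -
        ((k : ℝ) ^ 2 + 2) / 2 :=
  mulLogBound_le_sum_sub_sum (by omega)
end

section
/- For every real t ≥ 0, the digamma function satisfies ψ(t + 2) ≤ ln(t + e^{1−γ}), where γ is the Euler–Mascheroni constant. -/
/-!
Let `g = exp ∘ ψ`. The partial-fraction series `ψ x = -γ + ∑ (1 / (n + 1) - 1 / (n + x))` is
identified with `ψ` because both are monotone on `(0, ∞)`, satisfy `f (x + 1) = f x + 1 / x` and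
agree at `1`. Differentiating termwise gives `g'' = g (ψ'² + ψ'')`, and `ψ'² + ψ''` is nonnegative:
it does not increase under `x ↦ x + 1` (this is where `ψ' x ≥ 1 / x + 1 / (2 x²)` enters) and tends
to `0`. So `g` is convex, and since `g x ≤ x` (log-convexity of `Γ` gives `ψ x ≤ log x`) its slope
never exceeds `1`. Hence `g x - x` is nonincreasing and `g (t + 2) ≤ t + g 2 = t + exp (1 - γ)`.
-/

open Real Set Filter Topology

local notation "γ" => eulerMascheroniConstant

lemma hasSum_sub_succ_of_antitone {a : ℕ → ℝ} (ha : Antitone a) (h : Tendsto a atTop (𝓝 0)) :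
    HasSum (fun n ↦ a n - a (n + 1)) (a 0) := by
  rw [hasSum_iff_tendsto_nat_of_nonneg fun n ↦ sub_nonneg.2 (ha n.le_succ)]
  simp only [Finset.sum_range_sub' a]
  simpa using tendsto_const_nhds.sub h

lemma hasSum_one_div_nat_add_pow_sub {x : ℝ} (hx : 0 < x) {k : ℕ} (hk : 0 < k) :
    HasSum (fun n : ℕ ↦ 1 / ((n : ℝ) + x) ^ k - 1 / ((n : ℝ) + (x + 1)) ^ k) (1 / x ^ k) := by
  have anti : Antitone fun n : ℕ ↦ 1 / ((n : ℝ) + x) ^ k :=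
    antitone_nat_of_succ_le fun n ↦ by push_cast; gcongr; linarith
  have lim : Tendsto (fun n : ℕ ↦ 1 / ((n : ℝ) + x) ^ k) atTop (𝓝 0) :=
    tendsto_const_nhds.div_atTop <| (tendsto_pow_atTop hk.ne').comp <|
      tendsto_atTop_add_const_right _ x tendsto_natCast_atTop_atTop
  convert hasSum_sub_succ_of_antitone anti lim using 1
  · ext n
    push_cast
    ring_nf
  · simp

lemma tsum_nat_add_add_one {u : ℝ → ℝ} {x : ℝ} (hu : Summable fun n : ℕ ↦ u (n + x)) :
    ∑' n : ℕ, u (n + (x + 1)) = ∑' n : ℕ, u (n + x) - u x := by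
  rw [hu.tsum_eq_zero_add]
  push_cast
  simp only [zero_add, add_sub_cancel_left, add_right_comm _ (1 : ℝ), add_assoc]

lemma tendsto_tsum_nat_add_add_nat (u : ℝ → ℝ) (x : ℝ) :
    Tendsto (fun m : ℕ ↦ ∑' n : ℕ, u (n + (x + m))) atTop (𝓝 0) := by
  refine (tendsto_sum_nat_add fun n : ℕ ↦ u (n + x)).congr fun m ↦ tsum_congr fun n ↦ ?_
  push_cast
  ring_nf

lemma summable_one_div_nat_add_pow (x : ℝ) {k : ℕ} (hk : 1 < k) :
    Summable fun n : ℕ ↦ 1 / ((n : ℝ) + x) ^ k := by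
  refine .of_norm ?_
  simpa [abs_pow] using (Real.summable_one_div_nat_add_rpow x k).2 (mod_cast hk)

lemma norm_div_nat_add_pow_le (c : ℝ) (k n : ℕ) {a y : ℝ} (ha : 0 < a) (hay : a ≤ y) :
    ‖c / ((n : ℝ) + y) ^ k‖ ≤ |c| * (1 / ((n : ℝ) + a) ^ k) := by
  have : 0 < (n : ℝ) + a := by positivity
  rw [norm_div, norm_pow, Real.norm_eq_abs, Real.norm_eq_abs,
    abs_of_pos (show 0 < (n : ℝ) + y by linarith), mul_one_div]
  gcongr

section TermwiseDifferentiation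

variable {g : ℕ → ℝ → ℝ} {c : ℝ} {k : ℕ} {x₀ x : ℝ}

lemma summable_of_hasDerivAt_div_nat_add_pow (hk : 1 < k)
    (hg : ∀ n, ∀ y > 0, HasDerivAt (g n) (c / ((n : ℝ) + y) ^ k) y) (hx₀ : 0 < x₀)
    (hsum : Summable fun n ↦ g n x₀) (hx : 0 < x) : Summable fun n ↦ g n x :=
  have ha : 0 < min x₀ x / 2 := by positivity
  summable_of_summable_hasDerivAt_of_isPreconnected
    ((summable_one_div_nat_add_pow _ hk).mul_left |c|) isOpen_Ioi (convex_Ioi _).isPreconnected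
    (fun n y hy ↦ hg n y (ha.trans hy)) (fun n y hy ↦ norm_div_nat_add_pow_le c k n ha hy.le)
    (show min x₀ x / 2 < x₀ by linarith [min_le_left x₀ x]) hsum
    (show min x₀ x / 2 < x by linarith [min_le_right x₀ x])

lemma hasDerivAt_tsum_of_hasDerivAt_div_nat_add_pow (hk : 1 < k)
    (hg : ∀ n, ∀ y > 0, HasDerivAt (g n) (c / ((n : ℝ) + y) ^ k) y) (hx₀ : 0 < x₀)
    (hsum : Summable fun n ↦ g n x₀) (hx : 0 < x) :
    HasDerivAt (fun z ↦ ∑' n, g n z) (∑' n : ℕ, c / ((n : ℝ) + x) ^ k) x :=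
  have ha : 0 < min x₀ x / 2 := by positivity
  hasDerivAt_tsum_of_isPreconnected
    ((summable_one_div_nat_add_pow _ hk).mul_left |c|) isOpen_Ioi (convex_Ioi _).isPreconnected
    (fun n y hy ↦ hg n y (ha.trans hy)) (fun n y hy ↦ norm_div_nat_add_pow_le c k n ha hy.le)
    (show min x₀ x / 2 < x₀ by linarith [min_le_left x₀ x]) hsum
    (show min x₀ x / 2 < x by linarith [min_le_right x₀ x])

end TermwiseDifferentiation

lemma eqOn_Ioi_of_monotoneOn_of_add_one {f₁ f₂ r : ℝ → ℝ} (hr : Tendsto r atTop (𝓝 0))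
    (h₁ : MonotoneOn f₁ (Ioi 0)) (h₂ : MonotoneOn f₂ (Ioi 0))
    (hf₁ : ∀ x > 0, f₁ (x + 1) = f₁ x + r x) (hf₂ : ∀ x > 0, f₂ (x + 1) = f₂ x + r x)
    (h1 : f₁ 1 = f₂ 1) : EqOn f₁ f₂ (Ioi 0) := by
  have sandwich : ∀ f : ℝ → ℝ, MonotoneOn f (Ioi 0) → (∀ x > 0, f (x + 1) = f x + r x) →
      ∀ k > 0, ∀ y ∈ Icc k (k + 1), f k ≤ f y ∧ f y ≤ f k + r k :=
    fun f hf hfr k hk y hy ↦ ⟨hf hk (hk.trans_le hy.1) hy.1,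
      hfr k hk ▸ hf (hk.trans_le hy.1) (by simp only [mem_Ioi]; linarith) hy.2⟩
  have periodic : ∀ x > 0, ∀ n : ℕ, f₁ (x + n) - f₂ (x + n) = f₁ x - f₂ x := by
    intro x hx n
    induction n with
    | zero => simp
    | succ n ih =>
      have hxn : 0 < x + n := by positivity
      rw [Nat.cast_succ, ← add_assoc, hf₁ _ hxn, hf₂ _ hxn, ← ih]
      ring
  -- `f₁ - f₂` is `1`-periodic and vanishes at the integers, while on `[k, k + 1]` each `fᵢ`
  -- stays within `r k` of `fᵢ k`.
  intro x (hx : 0 < x)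
  set m := ⌊x⌋₊
  have bound : ∀ n : ℕ, |f₁ x - f₂ x| ≤ r (n + (m + 1)) := by
    intro n
    have hk : (0 : ℝ) < n + (m + 1) := by positivity
    have hy : x + (n + 1 : ℕ) ∈ Icc ((n : ℝ) + (m + 1)) (n + (m + 1) + 1) := by
      push_cast
      constructor <;> linarith [Nat.floor_le hx.le, Nat.lt_floor_add_one x]
    have hk₀ : f₁ (n + (m + 1)) = f₂ (n + (m + 1)) := by
      have := periodic 1 one_pos (n + m)
      push_cast at this
      rw [h1, sub_self, sub_eq_zero] at this
      convert this using 2 <;> ring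
    obtain ⟨l₁, u₁⟩ := sandwich f₁ h₁ hf₁ _ hk _ hy
    obtain ⟨l₂, u₂⟩ := sandwich f₂ h₂ hf₂ _ hk _ hy
    rw [← periodic x hx, abs_le]
    constructor <;> linarith
  have hlim : Tendsto (fun n : ℕ ↦ r (n + (m + 1))) atTop (𝓝 0) :=
    hr.comp (tendsto_atTop_add_const_right _ _ tendsto_natCast_atTop_atTop)
  exact sub_eq_zero.1 (abs_nonpos_iff.1 (ge_of_tendsto' hlim bound))

lemma ConvexOn.le_one_of_hasDerivAt_of_le_id {g : ℝ → ℝ} {g' x : ℝ} (hg : ConvexOn ℝ (Ici x) g)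
    (hd : HasDerivAt g g' x) (hle : ∀ y > x, g y ≤ y) : g' ≤ 1 := by
  have slope_bound : ∀ T > 0, g' ≤ 1 + (x - g x) / T := fun T hT ↦ calc
    g' ≤ slope g x (x + T) :=
      hg.le_slope_of_hasDerivAt self_mem_Ici (by simp only [mem_Ici]; linarith) (by linarith) hd
    _ = (g (x + T) - g x) / T := by rw [slope_def_field, add_sub_cancel_left]
    _ ≤ (x + T - g x) / T := by gcongr; exact hle _ (by linarith)
    _ = 1 + (x - g x) / T := by field_simp; ring
  have hlim : Tendsto (fun T ↦ 1 + (x - g x) / T) atTop (𝓝 1) := by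
    simpa using (tendsto_const_nhds (x := (1 : ℝ))).add
      ((tendsto_const_nhds (x := x - g x)).div_atTop tendsto_id)
  exact ge_of_tendsto hlim ((eventually_gt_atTop 0).mono slope_bound)

lemma Real.logDeriv_Gamma_add_one {x : ℝ} (hx : ∀ m : ℕ, x ≠ -m) :
    logDeriv Gamma (x + 1) = logDeriv Gamma x + 1 / x := by
  have hx₀ : x ≠ 0 := by simpa using hx 0
  have hshift : logDeriv (fun z ↦ Gamma (z + 1)) x = logDeriv Gamma (x + 1) := by
    simp only [logDeriv_apply, deriv_comp_add_const]
  have hmul : (fun z ↦ Gamma (z + 1)) =ᶠ[𝓝 x] fun z ↦ z * Gamma z := by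
    filter_upwards [isOpen_ne.mem_nhds hx₀] with z hz using Gamma_add_one hz
  rw [← hshift, (logDeriv_congr_nhds hmul).eq_of_nhds]
  exact (logDeriv_mul (f := fun z ↦ z) x hx₀ (Gamma_ne_zero hx) differentiableAt_id
    (differentiableAt_Gamma hx)).trans (by rw [logDeriv_id', add_comm])

lemma Real.differentiableAt_Gamma_of_pos {x : ℝ} (hx : 0 < x) : DifferentiableAt ℝ Gamma x :=
  differentiableOn_Gamma_Ioi.differentiableAt (isOpen_Ioi.mem_nhds hx)

lemma Real.deriv_log_Gamma {x : ℝ} (hx : 0 < x) : deriv (log ∘ Gamma) x = logDeriv Gamma x :=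
  deriv_log_comp_eq_logDeriv (differentiableAt_Gamma_of_pos hx) (Gamma_pos_of_pos hx).ne'

lemma Real.monotoneOn_logDeriv_Gamma : MonotoneOn (logDeriv Gamma) (Ioi 0) := by
  refine (convexOn_log_Gamma.monotoneOn_deriv fun x hx ↦ ?_).congr fun x hx ↦ deriv_log_Gamma hx
  exact (differentiableAt_Gamma_of_pos hx).log (Gamma_pos_of_pos hx).ne'

lemma Real.logDeriv_Gamma_le_log {x : ℝ} (hx : 0 < x) : logDeriv Gamma x ≤ log x := by
  have := convexOn_log_Gamma.deriv_le_slope hx (show 0 < x + 1 by linarith) (lt_add_one x)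
    ((differentiableAt_Gamma_of_pos hx).log (Gamma_pos_of_pos hx).ne')
  rwa [deriv_log_Gamma hx, slope_def_field, add_sub_cancel_left, div_one, Function.comp_apply,
    Function.comp_apply, Gamma_add_one hx.ne', log_mul hx.ne' (Gamma_pos_of_pos hx).ne',
    add_sub_cancel_right] at this

lemma Real.logDeriv_Gamma_one : logDeriv Gamma 1 = -γ := by
  rw [logDeriv_apply, hasDerivAt_Gamma_one.deriv, Gamma_one, div_one]

-- Partial-fraction series of `ψ + γ`, `ψ'` and `ψ''`.
noncomputable def digammaSeries (x : ℝ) : ℝ := ∑' n : ℕ, (1 / ((n : ℝ) + 1) - 1 / (n + x))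

noncomputable def trigammaSeries (x : ℝ) : ℝ := ∑' n : ℕ, 1 / ((n : ℝ) + x) ^ 2

noncomputable def tetragammaSeries (x : ℝ) : ℝ := ∑' n : ℕ, -2 / ((n : ℝ) + x) ^ 3

lemma hasDerivAt_digammaSeries_term (n : ℕ) {y : ℝ} (hy : 0 < y) :
    HasDerivAt (fun z ↦ 1 / ((n : ℝ) + 1) - 1 / (n + z)) (1 / ((n : ℝ) + y) ^ 2) y := by
  have := (((hasDerivAt_id y).const_add (n : ℝ)).inv (by positivity)).const_sub (1 / ((n : ℝ) + 1))
  simpa [one_div, neg_div] using this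

lemma summable_digammaSeries {x : ℝ} (hx : 0 < x) :
    Summable fun n : ℕ ↦ 1 / ((n : ℝ) + 1) - 1 / (n + x) :=
  summable_of_hasDerivAt_div_nat_add_pow one_lt_two (fun n _ ↦ hasDerivAt_digammaSeries_term n)
    one_pos (by simp) hx

lemma hasDerivAt_digammaSeries {x : ℝ} (hx : 0 < x) :
    HasDerivAt digammaSeries (trigammaSeries x) x :=
  hasDerivAt_tsum_of_hasDerivAt_div_nat_add_pow one_lt_two
    (fun n _ ↦ hasDerivAt_digammaSeries_term n) one_pos (by simp) hx

lemma digammaSeries_add_one {x : ℝ} (hx : 0 < x) :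
    digammaSeries (x + 1) = digammaSeries x + 1 / x := by
  have hsub := (summable_digammaSeries (by linarith : 0 < x + 1)).hasSum.sub
    (summable_digammaSeries hx).hasSum
  have tele := hasSum_one_div_nat_add_pow_sub hx one_pos
  simp only [pow_one] at tele
  have := hsub.unique (tele.congr_fun fun n ↦ by ring)
  rw [digammaSeries, digammaSeries]
  linarith

lemma monotoneOn_digammaSeries : MonotoneOn digammaSeries (Ioi 0) :=
  fun x (hx : 0 < x) y (hy : 0 < y) hxy ↦ (summable_digammaSeries hx).tsum_le_tsum
    (fun n ↦ by gcongr) (summable_digammaSeries hy)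

lemma Real.logDeriv_Gamma_eqOn_digammaSeries_sub :
    EqOn (logDeriv Gamma) (fun x ↦ digammaSeries x - γ) (Ioi 0) :=
  eqOn_Ioi_of_monotoneOn_of_add_one (r := fun x ↦ 1 / x) (by simpa using tendsto_inv_atTop_zero)
    monotoneOn_logDeriv_Gamma
    (fun x hx y hy hxy ↦ sub_le_sub_right (monotoneOn_digammaSeries hx hy hxy) γ)
    (fun x hx ↦ logDeriv_Gamma_add_one fun m ↦ ((neg_nonpos.2 m.cast_nonneg).trans_lt hx).ne')
    (fun x hx ↦ by rw [digammaSeries_add_one hx]; ring)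
    (by simp [logDeriv_Gamma_one, digammaSeries])

lemma trigammaSeries_add_one (x : ℝ) : trigammaSeries (x + 1) = trigammaSeries x - 1 / x ^ 2 :=
  tsum_nat_add_add_one (u := fun y ↦ 1 / y ^ 2) (summable_one_div_nat_add_pow x one_lt_two)

lemma tetragammaSeries_add_one (x : ℝ) :
    tetragammaSeries (x + 1) = tetragammaSeries x + 2 / x ^ 3 := by
  have hsum : Summable fun n : ℕ ↦ -2 / ((n : ℝ) + x) ^ 3 := by
    simpa only [mul_one_div] using (summable_one_div_nat_add_pow x (by norm_num)).mul_left (-2)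
  rw [tetragammaSeries, tetragammaSeries, tsum_nat_add_add_one (u := fun y ↦ -2 / y ^ 3) hsum]
  ring

lemma hasDerivAt_trigammaSeries {x : ℝ} (hx : 0 < x) :
    HasDerivAt trigammaSeries (tetragammaSeries x) x := by
  refine hasDerivAt_tsum_of_hasDerivAt_div_nat_add_pow (by norm_num) (fun n y hy ↦ ?_) hx
    (summable_one_div_nat_add_pow x one_lt_two) hx
  have h := (((hasDerivAt_id' y).const_add (n : ℝ)).fun_pow 2).fun_inv (by positivity)
  simpa only [one_div] using h.congr_deriv (by field_simp; ring)

lemma one_div_add_one_div_le_trigammaSeries {x : ℝ} (hx : 0 < x) :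
    1 / x + 1 / (2 * x ^ 2) ≤ trigammaSeries x := by
  have tele := (hasSum_one_div_nat_add_pow_sub hx one_pos).add
    ((hasSum_one_div_nat_add_pow_sub hx two_pos).mul_left (1 / 2))
  have := hasSum_le (fun n ↦ ?_) tele (summable_one_div_nat_add_pow x one_lt_two).hasSum
  · calc 1 / x + 1 / (2 * x ^ 2) = 1 / x ^ 1 + 1 / 2 * (1 / x ^ 2) := by ring
      _ ≤ trigammaSeries x := this
  have ha : 0 < (n : ℝ) + x := by positivity
  have gap : 1 / ((n : ℝ) + x) ^ 2 - (1 / ((n : ℝ) + x) ^ 1 - 1 / ((n : ℝ) + (x + 1)) ^ 1 +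
      1 / 2 * (1 / ((n : ℝ) + x) ^ 2 - 1 / ((n : ℝ) + (x + 1)) ^ 2)) =
      1 / 2 * (1 / ((n : ℝ) + x) - 1 / ((n : ℝ) + (x + 1))) ^ 2 := by
    field_simp
    ring
  nlinarith [sq_nonneg (1 / ((n : ℝ) + x) - 1 / ((n : ℝ) + (x + 1)))]

lemma sq_trigammaSeries_add_tetragammaSeries_nonneg {x : ℝ} (hx : 0 < x) :
    0 ≤ trigammaSeries x ^ 2 + tetragammaSeries x := by
  set φ := fun y ↦ trigammaSeries y ^ 2 + tetragammaSeries y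
  have step : ∀ y > 0, φ (y + 1) ≤ φ y := by
    intro y hy
    have hP := one_div_add_one_div_le_trigammaSeries hy
    have key :
        φ (y + 1) - φ y = -(2 / y ^ 2) * (trigammaSeries y - (1 / y + 1 / (2 * y ^ 2))) := by
      simp only [φ, trigammaSeries_add_one, tetragammaSeries_add_one]
      field_simp
      ring
    nlinarith [mul_nonneg (by positivity : 0 ≤ 2 / y ^ 2) (sub_nonneg.2 hP)]
  have anti : Antitone fun n : ℕ ↦ φ (x + n) :=
    antitone_nat_of_succ_le fun n ↦ by
      rw [Nat.cast_succ, ← add_assoc]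
      exact step _ (by positivity)
  have lim : Tendsto (fun n : ℕ ↦ φ (x + n)) atTop (𝓝 (0 ^ 2 + 0)) :=
    ((tendsto_tsum_nat_add_add_nat (fun y ↦ 1 / y ^ 2) x).pow 2).add
      (tendsto_tsum_nat_add_add_nat (fun y ↦ -2 / y ^ 3) x)
  simpa using anti.le_of_tendsto lim 0

lemma Real.hasDerivAt_logDeriv_Gamma {x : ℝ} (hx : 0 < x) :
    HasDerivAt (logDeriv Gamma) (trigammaSeries x) x :=
  ((hasDerivAt_digammaSeries hx).sub_const γ).congr_of_eventuallyEq <|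
    eventually_of_mem (isOpen_Ioi.mem_nhds hx) fun _ hy ↦ logDeriv_Gamma_eqOn_digammaSeries_sub hy

lemma Real.convexOn_exp_logDeriv_Gamma : ConvexOn ℝ (Ioi 0) fun x ↦ exp (logDeriv Gamma x) := by
  have pos : ∀ x ∈ interior (Ioi (0 : ℝ)), 0 < x := by simp
  refine convexOn_of_hasDerivWithinAt2_nonneg (convex_Ioi 0)
    (f'' := fun x ↦ exp (logDeriv Gamma x) * (trigammaSeries x ^ 2 + tetragammaSeries x))
    (fun x hx ↦ (hasDerivAt_logDeriv_Gamma hx).exp.continuousAt.continuousWithinAt)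
    (fun x hx ↦ (hasDerivAt_logDeriv_Gamma (pos x hx)).exp.hasDerivWithinAt)
    (fun x hx ↦ ?_)
    fun x hx ↦ mul_nonneg (exp_pos _).le (sq_trigammaSeries_add_tetragammaSeries_nonneg (pos x hx))
  have hx := pos x hx
  exact (((hasDerivAt_logDeriv_Gamma hx).exp.mul (hasDerivAt_trigammaSeries hx)).congr_deriv
    (by ring)).hasDerivWithinAt

lemma Real.antitoneOn_exp_logDeriv_Gamma_sub :
    AntitoneOn (fun x ↦ exp (logDeriv Gamma x) - x) (Ioi 0) := by
  have pos : ∀ x ∈ interior (Ioi (0 : ℝ)), 0 < x := by simp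
  have hderiv : ∀ x > 0, HasDerivAt (fun x ↦ exp (logDeriv Gamma x) - x)
      (exp (logDeriv Gamma x) * trigammaSeries x - 1) x := fun x hx ↦
    (hasDerivAt_logDeriv_Gamma hx).exp.sub (hasDerivAt_id x)
  refine antitoneOn_of_hasDerivWithinAt_nonpos (convex_Ioi 0)
    (fun x hx ↦ (hderiv x hx).continuousAt.continuousWithinAt)
    (fun x hx ↦ (hderiv x (pos x hx)).hasDerivWithinAt) fun x hx ↦ sub_nonpos.2 ?_
  have hx := pos x hx
  have hconv := convexOn_exp_logDeriv_Gamma.subset (Ici_subset_Ioi.2 hx) (convex_Ici x)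
  refine hconv.le_one_of_hasDerivAt_of_le_id (hasDerivAt_logDeriv_Gamma hx).exp fun y hy ↦ ?_
  have hy : 0 < y := hx.trans hy
  exact (exp_le_exp.2 (logDeriv_Gamma_le_log hy)).trans_eq (exp_log hy)

theorem digamma_upper_bound (t : ℝ) (ht : 0 ≤ t) :
    deriv Real.Gamma (t + 2) / Real.Gamma (t + 2) ≤
      Real.log (t + Real.exp (1 - Real.eulerMascheroniConstant)) := by
  have hψ2 : logDeriv Gamma 2 = 1 - γ := by
    have := logDeriv_Gamma_add_one (x := 1) fun m ↦ by linarith [m.cast_nonneg (α := ℝ)]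
    norm_num [logDeriv_Gamma_one] at this
    linarith
  have hanti : exp (logDeriv Gamma (t + 2)) - (t + 2) ≤ exp (logDeriv Gamma 2) - 2 :=
    antitoneOn_exp_logDeriv_Gamma_sub (show (0 : ℝ) < 2 by norm_num) (show 0 < t + 2 by linarith)
      (by linarith)
  rw [← logDeriv_apply, ← log_exp (logDeriv Gamma (t + 2))]
  exact log_le_log (exp_pos _) (by rw [hψ2] at hanti; linarith)
end

section
/- For every integer n ≥ 1, Γ(2 + n/2) < (π(n + 17)/17)^{n/2}. -/
/-!
Write `n / 2 = k - 1 + t` with `k ∈ ℕ` and `t ∈ {0, 1/2}`. Log-convexity of `Γ` gives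
`Γ(k + 1 + t) ≤ k! (k + 1)^t`, and the Stirling bound `k! ≤ e √k (k/e)^k` reduces the claim to an
elementary inequality in `k`. Its leading terms cancel because `2π/17` is slightly larger than
`1/e`: `log (2eπ/17) > 0.00464`. What remains, `(3/2) log k` against `0.00464 k` plus a rational
function of `k`, follows from the Padé bound `log (1 + u) ≥ 2u/(2 + u)` and tangent lines of `log`.
-/

open Real
open scoped Nat

lemma log_factorial_le_stirling {n : ℕ} (hn : n ≠ 0) :
    log n ! ≤ n * log n - n + log n / 2 + 1 := by
  obtain ⟨m, rfl⟩ := Nat.exists_eq_succ_of_ne_zero hn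
  have h := Stirling.log_stirlingSeq'_antitone (Nat.zero_le m)
  simp only [Function.comp_apply, Nat.succ_eq_add_one, zero_add, Stirling.stirlingSeq_one,
    Stirling.log_stirlingSeq_formula] at h
  have hm : (0 : ℝ) < (m + 1 : ℕ) := by positivity
  rw [log_div (exp_pos 1).ne' (by positivity), log_exp, log_sqrt (by norm_num),
    log_mul (by norm_num) hm.ne', log_div hm.ne' (exp_pos 1).ne', log_exp] at h
  linarith

lemma log_Gamma_nat_add_one_add_le (k : ℕ) {t : ℝ} (ht₀ : 0 ≤ t) (ht₁ : t ≤ 1) :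
    log (Gamma (k + 1 + t)) ≤ log k ! + t * log (k + 1) := by
  rcases ht₀.eq_or_lt with rfl | ht₀
  · simp [Gamma_nat_eq_factorial]
  have h := BohrMollerup.f_add_nat_le (f := log ∘ Gamma) convexOn_log_Gamma
    (fun {y} hy => by
      simp only [Function.comp_apply]
      rw [Gamma_add_one hy.ne', log_mul hy.ne' (Gamma_pos_of_pos hy).ne', add_comm])
    k.succ_ne_zero ht₀ ht₁
  simpa [Gamma_nat_eq_factorial] using h

lemma le_log_two_mul_exp_one_mul_pi_div_seventeen :
    (0.00464 : ℝ) ≤ log (2 * exp 1 * π / 17) := by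
  have h := one_sub_inv_le_log_of_pos (by positivity : (0 : ℝ) < 2 * exp 1 * π / 17)
  have h' : (2 * exp 1 * π / 17)⁻¹ ≤ 0.99536 := by
    rw [inv_le_comm₀ (by positivity) (by norm_num), le_div_iff₀ (by norm_num)]
    nlinarith [exp_one_gt_d9, pi_gt_d6]
  linarith

lemma log_pi_mul_two_mul_add_seventeen_div_seventeen {s : ℝ} (hs : 0 ≤ s) :
    log (π * (2 * s + 17) / 17) = log (2 * exp 1 * π / 17) - 1 + log (s + 17 / 2) := by
  rw [show π * (2 * s + 17) / 17 = 2 * exp 1 * π / 17 * (s + 17 / 2) / exp 1 by field_simp,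
    log_div (by positivity) (exp_pos 1).ne', log_mul (by positivity) (by positivity), log_exp]
  ring

lemma log_add_two_mul_div_le_log_add {w a : ℝ} (hw : 0 < w) (ha : 0 ≤ a) :
    log w + 2 * a / (a + 2 * w) ≤ log (w + a) := by
  have h := le_log_one_add_of_nonneg (div_nonneg ha hw.le)
  rw [show 2 * (a / w) / (a / w + 2) = 2 * a / (a + 2 * w) by field_simp] at h
  rw [show w + a = w * (1 + a / w) by field_simp, log_mul hw.ne' (by positivity)]
  linarith

lemma log_le_nat_sub_one_add_div {x : ℝ} (hx : 0 < x) (j : ℕ) :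
    log x ≤ j - 1 + x / 2.718 ^ j := by
  have he : (2.718 : ℝ) ^ j ≤ exp j := by
    rw [← exp_one_pow]
    gcongr
    linarith [exp_one_gt_d9]
  have h := log_le_sub_one_of_pos (div_pos hx (exp_pos j))
  rw [log_div hx.ne' (exp_pos j).ne', log_exp] at h
  have : x / exp j ≤ x / 2.718 ^ j := by gcongr
  linarith

lemma three_halves_mul_log_lt {w : ℝ} (hw : 2 ≤ w) :
    3 / 2 * log w + 36 / (w + 4) + 1 / (2 * w) < 15 / 2 + (w - 1) * 0.00464 := by
  have hw₀ : 0 < w := by linarith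
  -- tangent lines of `log` at `e, e³, e⁵, e⁶`; the last one works on all of `[220, ∞)`
  -- because `(3/2) e⁻⁶ < 0.00464`
  obtain ⟨j, hj⟩ : ∃ j : ℕ, 3 * w * (w + 4) * (j - 1 + w / 2.718 ^ j) + 72 * w + (w + 4) <
      w * (w + 4) * (15 + (w - 1) * 0.00928) := by
    rcases le_or_gt w 8 with h8 | h8
    · exact ⟨1, by norm_num; nlinarith [mul_nonneg (sub_nonneg.2 hw) (sub_nonneg.2 h8)]⟩
    rcases le_or_gt w 50 with h50 | h50
    · exact ⟨3, by norm_num; nlinarith [mul_nonneg (sub_nonneg.2 h8.le) (sub_nonneg.2 h50)]⟩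
    rcases le_or_gt w 220 with h220 | h220
    · exact ⟨5, by norm_num; nlinarith [mul_nonneg (sub_nonneg.2 h50.le) (sub_nonneg.2 h220)]⟩
    · exact ⟨6, by
        norm_num; nlinarith [mul_nonneg (mul_nonneg hw₀.le hw₀.le) (sub_nonneg.2 h220.le)]⟩
  have := log_le_nat_sub_one_add_div hw₀ j
  rw [← sub_pos]
  field_simp
  nlinarith [mul_pos hw₀ (by linarith : (0 : ℝ) < w + 4)]

/-- Equality holds at `t = 1/2`; this is where the left-hand side comes from. -/
lemma fifteen_halves_sub_le_mul_div_sub {w t : ℝ} (hw : 2 ≤ w) (ht₀ : 0 ≤ t) (ht₁ : t ≤ 1 / 2) :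
    15 / 2 - 36 / (w + 4) - 1 / (2 * w) ≤
      (w - 1 + t) * (2 * (15 / 2 + t) / (15 / 2 + t + 2 * w)) - t - t / w := by
  have hw₀ : 0 < w := by linarith
  -- the difference of the two sides is `(1 - 2t) Q / (2w (w + 4) (15/2 + t + 2w))`
  have hQ : 0 ≤ (7 / 2 - t) * w ^ 2 - (29 / 2 + 3 * t) * w + 30 + 4 * t := by
    nlinarith [sq_nonneg (w - 8 / 3),
      mul_nonneg (sub_nonneg.2 ht₁) (by nlinarith : (0 : ℝ) ≤ w ^ 2 + 3 * w - 4)]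
  rw [← sub_nonneg]
  field_simp
  nlinarith [mul_nonneg (by linarith : (0 : ℝ) ≤ 1 - 2 * t) hQ]

lemma log_factorial_add_mul_log_lt {k : ℕ} {t : ℝ} (hk : 1 ≤ k) (ht₀ : 0 ≤ t) (ht₁ : t ≤ 1 / 2)
    (hkt : 1 / 2 ≤ (k : ℝ) - 1 + t) :
    log k ! + t * log (k + 1) < (k - 1 + t) * log (π * (2 * (k - 1 + t) + 17) / 17) := by
  rcases hk.eq_or_lt with rfl | hk
  · obtain rfl : t = 1 / 2 := by norm_num at hkt; linarith
    norm_num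
    exact log_lt_log (by norm_num) (by nlinarith [pi_gt_three])
  have hw : (2 : ℝ) ≤ k := by exact_mod_cast hk
  have hw₀ : (0 : ℝ) < k := by linarith
  have hs : (0 : ℝ) ≤ k - 1 + t := by linarith
  rw [log_pi_mul_two_mul_add_seventeen_div_seventeen hs]
  have hpade := log_add_two_mul_div_le_log_add hw₀ (by linarith : (0 : ℝ) ≤ 15 / 2 + t)
  rw [show (k : ℝ) + (15 / 2 + t) = k - 1 + t + 17 / 2 by ring] at hpade
  have hsucc : log (k + 1) ≤ log k + 1 / k := by
    have h := log_le_sub_one_of_pos (by positivity : (0 : ℝ) < (k + 1) / k)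
    rw [log_div (by positivity) hw₀.ne',
      show ((k : ℝ) + 1) / k - 1 = 1 / k by field_simp; ring] at h
    linarith
  linear_combination mul_le_mul_of_nonneg_left le_log_two_mul_exp_one_mul_pi_div_seventeen hs +
    mul_le_mul_of_nonneg_left hpade hs + mul_le_mul_of_nonneg_left hsucc ht₀ +
    log_factorial_le_stirling (by omega : k ≠ 0) + three_halves_mul_log_lt hw +
    fifteen_halves_sub_le_mul_div_sub hw ht₀ ht₁ + 0.00464 * ht₀

theorem gamma_lt_pow (n : ℕ) (hn : 1 ≤ n) :
    Real.Gamma (2 + (n : ℝ) / 2) < (Real.pi * ((n : ℝ) + 17) / 17) ^ ((n : ℝ) / 2) := by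
  obtain ⟨k, t, hk, ht₀, ht₁, hnkt⟩ :
      ∃ (k : ℕ) (t : ℝ), 1 ≤ k ∧ 0 ≤ t ∧ t ≤ 1 / 2 ∧ (n : ℝ) / 2 = k - 1 + t := by
    obtain ⟨m, rfl | rfl⟩ := Nat.even_or_odd' n
    · exact ⟨m + 1, 0, by omega, le_rfl, by norm_num, by push_cast; ring⟩
    · exact ⟨m + 1, 1 / 2, by omega, by norm_num, le_rfl, by push_cast; ring⟩
  have hkt : 1 / 2 ≤ (k : ℝ) - 1 + t := by
    rw [← hnkt]
    have : (1 : ℝ) ≤ n := by exact_mod_cast hn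
    linarith
  rw [lt_rpow_iff_log_lt (Gamma_pos_of_pos (by positivity)) (by positivity),
    show (n : ℝ) + 17 = 2 * (n / 2) + 17 by ring, hnkt,
    show 2 + (k - 1 + t) = (k : ℝ) + 1 + t by ring]
  exact (log_Gamma_nat_add_one_add_le k ht₀ (by linarith)).trans_lt
    (log_factorial_add_mul_log_lt hk ht₀ ht₁ hkt)
end

section
/- For every integer n ≥ 1, Hermite's constant γ_n satisfies γ_n < n/8.5 + 2, assuming Blichfeldt's bound γ_n ≤ (2/π)·Γ(2 + n/2)^{2/n}. -/
/-!
With `x = 2 + n/2` the claim is `Γ(x) < (π(2x+13)/17)^(x-2)`. On `1 + ℕ/2` the Gamma function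
obeys the Stirling-type bound `log Γ(x) ≤ (x - 1/2) log x + 1 - x`: it is an equality at `x = 1`,
holds at `x = 3/2` because `πe ≤ 9`, and propagates from `x` to `x + 1` because
`log (1 + 1/x) ≥ 2/(2x+1)`. After cancelling `x log x`, what remains is
`(3/2) log x < 1 + (x - 2) log (πe(2x+13)/(17x))`. The constant `8.5` sits just below `πe`, so the
right side grows linearly with slope `log (πe/8.5) > 0.0046`; this beats `(3/2) log x`, which is
checked by tangent lines of `log` at four powers of `e`.
-/

open Real Set

lemma two_div_two_mul_add_one_le_log_one_add_inv {a : ℝ} (ha : 0 < a) :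
    2 / (2 * a + 1) ≤ log (1 + a⁻¹) := by
  have h := le_hasSum (hasSum_log_one_add_inv ha) 0 fun k _ => by positivity
  simpa [div_eq_mul_inv] using h

lemma log_le_div_pow_add_sub_one (k : ℕ) {x : ℝ} (hx : 0 < x) :
    log x ≤ x / 2.718 ^ k + k - 1 := by
  have ha : (0 : ℝ) < 2.718 ^ k := by positivity
  have htangent := log_le_sub_one_of_pos (div_pos hx ha)
  rw [log_div hx.ne' ha.ne', log_pow] at htangent
  have hlog : log 2.718 ≤ 1 := by
    rw [log_le_iff_le_exp (by norm_num)]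
    linarith [exp_one_gt_d9]
  nlinarith [k.cast_nonneg (α := ℝ)]

lemma div_affine_le_chord {lo hi x : ℝ} (hlo : 0 ≤ lo) (hx : x ∈ Icc lo hi) :
    (hi - lo) / (4 * x + 13) ≤ (hi - x) / (4 * lo + 13) + (x - lo) / (4 * hi + 13) := by
  obtain ⟨h1, h2⟩ := hx
  have hD (t : ℝ) (ht : lo ≤ t) : 0 < 4 * t + 13 := by linarith
  rw [div_add_div _ _ (hD lo le_rfl).ne' (hD hi (h1.trans h2)).ne',
    div_le_div_iff₀ (hD x h1) (mul_pos (hD lo le_rfl) (hD hi (h1.trans h2)))]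
  nlinarith [mul_nonneg (mul_nonneg (sub_nonneg.2 h1) (sub_nonneg.2 h2))
    (sub_nonneg.2 (h1.trans h2))]

/-- Lower bound for `1 + (x - 2) log (πe(2x+13)/(17x))`, using `log (πe/8.5) > 23/5000` and
`log (1 + 13/(2x)) ≥ 26/(4x+13)`. -/
noncomputable def hermiteMargin (x : ℝ) : ℝ := 1 + (x - 2) * (23 / 5000 + 26 / (4 * x + 13))

lemma hermiteMargin_eq {x : ℝ} (hx : 0 ≤ x) :
    hermiteMargin x = 15 / 2 + 23 / 5000 * (x - 2) - 273 / 2 / (4 * x + 13) := by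
  unfold hermiteMargin; field_simp; ring

-- `hermiteMargin` is concave, so a line below it at both ends of an interval stays below it.
lemma le_hermiteMargin_of_mem_Icc {α β lo hi x : ℝ} (hlo : 0 ≤ lo) (hx : x ∈ Icc lo hi)
    (h_lo : α * lo + β ≤ hermiteMargin lo) (h_hi : α * hi + β ≤ hermiteMargin hi) :
    α * x + β ≤ hermiteMargin x := by
  have hchord := div_affine_le_chord hlo hx
  obtain ⟨h1, h2⟩ := hx
  rcases h1.eq_or_lt with rfl | hlt
  · exact h_lo
  rw [hermiteMargin_eq hlo] at h_lo
  rw [hermiteMargin_eq (hlo.trans (h1.trans h2))] at h_hi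
  rw [hermiteMargin_eq (hlo.trans h1)]
  have e1 := mul_le_mul_of_nonneg_left h_lo (sub_nonneg.2 h2)
  have e2 := mul_le_mul_of_nonneg_left h_hi (sub_nonneg.2 h1)
  refine le_of_mul_le_mul_left ?_ (sub_pos.2 (hlt.trans_le h2))
  linear_combination e1 + e2 + 273 / 2 * hchord

lemma le_hermiteMargin_of_le {α β lo x : ℝ} (hlo : 0 ≤ lo) (hx : lo ≤ x) (hα : α ≤ 23 / 5000)
    (h_lo : α * lo + β ≤ hermiteMargin lo) : α * x + β ≤ hermiteMargin x := by
  rw [hermiteMargin_eq hlo] at h_lo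
  rw [hermiteMargin_eq (hlo.trans hx)]
  have : 273 / 2 / (4 * x + 13) ≤ 273 / 2 / (4 * lo + 13) := by gcongr
  nlinarith [mul_le_mul_of_nonneg_right hα (sub_nonneg.2 hx)]

lemma three_halves_log_le_hermiteMargin {x : ℝ} (hx : 5 / 2 ≤ x) :
    3 / 2 * log x ≤ hermiteMargin x := by
  have tangent (k : ℕ) : 3 / 2 * log x ≤ 3 / 2 / 2.718 ^ k * x + 3 / 2 * (k - 1) :=
    calc 3 / 2 * log x ≤ 3 / 2 * (x / 2.718 ^ k + k - 1) := by
          linarith [log_le_div_pow_add_sub_one k (show 0 < x by linarith)]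
      _ = 3 / 2 / 2.718 ^ k * x + 3 / 2 * (k - 1) := by ring
  rcases le_total x 8 with h8 | h8
  · exact (tangent 1).trans (le_hermiteMargin_of_mem_Icc (by norm_num) ⟨hx, h8⟩
      (by norm_num [hermiteMargin]) (by norm_num [hermiteMargin]))
  rcases le_total x 40 with h40 | h40
  · exact (tangent 3).trans (le_hermiteMargin_of_mem_Icc (by norm_num) ⟨h8, h40⟩
      (by norm_num [hermiteMargin]) (by norm_num [hermiteMargin]))
  rcases le_total x 240 with h240 | h240
  · exact (tangent 5).trans (le_hermiteMargin_of_mem_Icc (by norm_num) ⟨h40, h240⟩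
      (by norm_num [hermiteMargin]) (by norm_num [hermiteMargin]))
  · exact (tangent 6).trans (le_hermiteMargin_of_le (by norm_num) h240 (by norm_num)
      (by norm_num [hermiteMargin]))

lemma lt_log_pi_mul_exp_one_div : 23 / 5000 < log (π * exp 1 / 8.5) := by
  rw [lt_log_iff_exp_lt (by positivity)]
  have hexp := exp_bound_div_one_sub_of_interval' (x := 23 / 5000) (by norm_num) (by norm_num)
  have hπe : 3.1415 * 2.7182818283 < π * exp 1 :=
    mul_lt_mul'' pi_gt_d4 exp_one_gt_d9 (by norm_num) (by norm_num)
  refine hexp.trans ?_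
  rw [lt_div_iff₀ (by norm_num)]
  norm_num at hπe ⊢
  linarith

lemma log_Gamma_add_one_le {x : ℝ} (hx : 0 < x)
    (h : log (Gamma x) ≤ (x - 1 / 2) * log x + 1 - x) :
    log (Gamma (x + 1)) ≤ (x + 1 - 1 / 2) * log (x + 1) + 1 - (x + 1) := by
  have hpade := two_div_two_mul_add_one_le_log_one_add_inv hx
  rw [show 1 + x⁻¹ = (x + 1) / x by field_simp, log_div (by linarith) hx.ne'] at hpade
  have hstep : 1 ≤ (x + 1 / 2) * (log (x + 1) - log x) :=
    calc (1 : ℝ) = (x + 1 / 2) * (2 / (2 * x + 1)) := by field_simp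
      _ ≤ (x + 1 / 2) * (log (x + 1) - log x) := by gcongr
  rw [Gamma_add_one hx.ne', log_mul hx.ne' (Gamma_pos_of_pos hx).ne']
  linarith

lemma Gamma_three_halves_le : Gamma (3 / 2) ≤ 3 / 2 * exp (-(1 / 2)) := by
  rw [show (3 / 2 : ℝ) = 1 / 2 + 1 by norm_num, Gamma_add_one (by norm_num), Gamma_one_half_eq]
  have hsq : (3 * exp (-(1 / 2))) ^ 2 = 9 * exp (-1) := by
    rw [mul_pow, ← exp_nat_mul]; norm_num
  have hπe : π * exp 1 ≤ 9 :=
    (mul_lt_mul'' pi_lt_d2 exp_one_lt_d9 pi_pos.le (exp_pos 1).le).le.trans (by norm_num)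
  have hπ : √π ≤ 3 * exp (-(1 / 2)) := by
    rw [sqrt_le_left (by positivity), hsq, exp_neg, ← div_eq_mul_inv, le_div_iff₀ (exp_pos 1)]
    exact hπe
  linarith

lemma log_Gamma_one_add_half_le (m : ℕ) :
    log (Gamma (1 + m / 2)) ≤ (1 + m / 2 - 1 / 2) * log (1 + m / 2) + 1 - (1 + m / 2) := by
  induction m using Nat.twoStepInduction with
  | zero => simp
  | one =>
    have h := log_le_log (Gamma_pos_of_pos (by norm_num)) Gamma_three_halves_le
    rw [log_mul (by norm_num) (exp_pos _).ne', log_exp] at h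
    norm_num at h ⊢
    linarith
  | more m ih _ =>
    have hx : (1 : ℝ) + ((m + 2 : ℕ) : ℝ) / 2 = 1 + m / 2 + 1 := by push_cast; ring
    rw [hx]
    exact log_Gamma_add_one_le (by positivity) ih

lemma stirling_bound_lt_mul_log {x : ℝ} (hx : 5 / 2 ≤ x) :
    (x - 1 / 2) * log x + 1 - x < (x - 2) * log (π * (2 * x + 13) / 17) := by
  have hsplit : log (π * (2 * x + 13) / 17) =
      log x - 1 + (log (π * exp 1 / 8.5) + log (1 + (2 * x / 13)⁻¹)) := by
    have h : π * (2 * x + 13) / 17 =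
        x * exp (-1) * (π * exp 1 / 8.5 * (1 + (2 * x / 13)⁻¹)) := by
      rw [exp_neg]; field_simp; ring
    rw [h, log_mul (by positivity) (by positivity), log_mul (by positivity) (by positivity),
      log_mul (by positivity) (by positivity), log_exp]
    ring
  have hpade := two_div_two_mul_add_one_le_log_one_add_inv (by positivity : 0 < 2 * x / 13)
  rw [show 2 / (2 * (2 * x / 13) + 1) = 26 / (4 * x + 13) by field_simp; ring] at hpade
  have hgrowth := mul_lt_mul_of_pos_left (add_lt_add_of_lt_of_le lt_log_pi_mul_exp_one_div hpade)
    (show 0 < x - 2 by linarith)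
  have hlog := three_halves_log_le_hermiteMargin hx
  rw [hermiteMargin] at hlog
  rw [hsplit]
  linarith

lemma Gamma_rpow_two_div_lt {n : ℕ} (hn : 1 ≤ n) :
    Gamma (2 + n / 2) ^ ((2 : ℝ) / n) < π * (n + 17) / 17 := by
  have hn1 : (1 : ℝ) ≤ n := by exact_mod_cast hn
  have hlog : log (Gamma (2 + n / 2)) < n / 2 * log (π * (n + 17) / 17) := by
    have hstirling := log_Gamma_one_add_half_le (n + 2)
    have hcmp := stirling_bound_lt_mul_log (x := 2 + n / 2) (by linarith)
    rw [show (1 : ℝ) + ((n + 2 : ℕ) : ℝ) / 2 = 2 + n / 2 by push_cast; ring] at hstirling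
    rw [show (2 : ℝ) + n / 2 - 2 = n / 2 by ring,
      show 2 * (2 + (n : ℝ) / 2) + 13 = n + 17 by ring] at hcmp
    exact hstirling.trans_lt hcmp
  rw [rpow_def_of_pos (Gamma_pos_of_pos (by positivity)), ← lt_log_iff_exp_lt (by positivity)]
  calc log (Gamma (2 + n / 2)) * (2 / n) < n / 2 * log (π * (n + 17) / 17) * (2 / n) :=
        mul_lt_mul_of_pos_right hlog (by positivity)
    _ = log (π * (n + 17) / 17) := by field_simp

theorem hermite_linear_bound (γ : ℕ → ℝ)
    (hblich : ∀ n : ℕ, 1 ≤ n →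
      γ n ≤ 2 / Real.pi * Real.Gamma (2 + (n : ℝ) / 2) ^ ((2 : ℝ) / n)) :
    ∀ n : ℕ, 1 ≤ n → γ n < (n : ℝ) / 8.5 + 2 := by
  intro n hn
  calc γ n ≤ 2 / π * Gamma (2 + (n : ℝ) / 2) ^ ((2 : ℝ) / n) := hblich n hn
    _ < 2 / π * (π * (n + 17) / 17) := by gcongr; exact Gamma_rpow_two_div_lt hn
    _ = (n : ℝ) / 8.5 + 2 := by field_simp; norm_num; ring
end
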